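/- arXiv:1806.05151 — 10 statements merged into one kernel-verified Lean document; each statement's English description precedes it below -/
import Mathlib

section
/- For every r-element index set I ⊆ {1,…,d} and every orthogonal matrix Ψ ∈ ℝ^{r×r}, the matrix X = O^B (Λ^B)^{-1/2} O^Ã_{:,I} Ψ satisfies Xᵀ B X = I_r and A X = B X (Xᵀ A X); that is, (X, Xᵀ A X) is an equilibrium of the GEV Lagrangian. -/
open Matrix

/-- With `B = O^B Λ^B (O^B)ᵀ` (eigendecomposition, `Λ^B` positive diagonal),
`Ã = (Λ^B)^{-1/2} (O^B)ᵀ A O^B (Λ^B)^{-1/2}` with eigendecomposition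
`Ã = O^Ã Λ^Ã (O^Ã)ᵀ` (`λ̃` nonincreasing), for every `r`-element index set `I ⊆ {1,…,d}`
(encoded by an injection `e : Fin r ↪ Fin d`) and every orthogonal `Ψ`, the matrix
`X = O^B (Λ^B)^{-1/2} O^Ã_{:,I} Ψ` satisfies `Xᵀ B X = I_r` and `A X = B X (Xᵀ A X)`,
i.e. `(X, Xᵀ A X)` is an equilibrium of the GEV Lagrangian. -/
theorem gev_equilibrium_of_eigencolumns
    (d r : ℕ) (hd : 1 ≤ d) (hr : 1 ≤ r) (hrd : r ≤ d)
    (A B : Matrix (Fin d) (Fin d) ℝ) (hA : Aᵀ = A) (hB : B.PosDef)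
    (OB : Matrix (Fin d) (Fin d) ℝ) (hOB : OBᵀ * OB = 1)
    (μ : Fin d → ℝ) (hμ : ∀ i, 0 < μ i)
    (hBdec : B = OB * diagonal μ * OBᵀ)
    (OA : Matrix (Fin d) (Fin d) ℝ) (hOA : OAᵀ * OA = 1)
    (lam : Fin d → ℝ) (hlam : ∀ i j : Fin d, i ≤ j → lam j ≤ lam i)
    (hAdec : diagonal (fun i => (Real.sqrt (μ i))⁻¹) * OBᵀ * A * OB *
        diagonal (fun i => (Real.sqrt (μ i))⁻¹) = OA * diagonal lam * OAᵀ)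
    (e : Fin r ↪ Fin d) (Ψ : Matrix (Fin r) (Fin r) ℝ) (hΨ : Ψᵀ * Ψ = 1)
    (X : Matrix (Fin d) (Fin r) ℝ)
    (hX : X = OB * diagonal (fun i => (Real.sqrt (μ i))⁻¹) * OA.submatrix id ⇑e * Ψ) :
    Xᵀ * B * X = 1 ∧ A * X = B * X * (Xᵀ * A * X) := by

  have hsq : ∀ i, Real.sqrt (μ i) ≠ 0 := fun i => ne_of_gt (Real.sqrt_pos.mpr (hμ i))
  set S : Matrix (Fin d) (Fin d) ℝ := diagonal (fun i => (Real.sqrt (μ i))⁻¹) with hSdef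
  set T : Matrix (Fin d) (Fin d) ℝ := diagonal (fun i => Real.sqrt (μ i)) with hTdef
  set C : Matrix (Fin d) (Fin r) ℝ := OA.submatrix id ⇑e with hCdef
  set D : Matrix (Fin d) (Fin d) ℝ := diagonal lam with hDdef
  set De : Matrix (Fin r) (Fin r) ℝ := diagonal (fun i => lam (e i)) with hDedef
  set E : Matrix (Fin d) (Fin r) ℝ := (1 : Matrix (Fin d) (Fin d) ℝ).submatrix id ⇑e with hEdef
  have hSt : Sᵀ = S := by rw [hSdef, diagonal_transpose]
  have hST : S * T = 1 := by
    rw [hSdef, hTdef, diagonal_mul_diagonal]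
    rw [show (fun i => (Real.sqrt (μ i))⁻¹ * Real.sqrt (μ i)) = fun _ => (1:ℝ) from
      funext fun i => inv_mul_cancel₀ (hsq i), diagonal_one]
  have hTS : T * S = 1 := by
    rw [hTdef, hSdef, diagonal_mul_diagonal]
    rw [show (fun i => Real.sqrt (μ i) * (Real.sqrt (μ i))⁻¹) = fun _ => (1:ℝ) from
      funext fun i => mul_inv_cancel₀ (hsq i), diagonal_one]
  have hMS : diagonal μ * S = T := by
    rw [hSdef, hTdef, diagonal_mul_diagonal]
    rw [show (fun i => μ i * (Real.sqrt (μ i))⁻¹) = fun i => Real.sqrt (μ i) from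
      funext fun i => by
        nth_rewrite 1 [← Real.mul_self_sqrt (hμ i).le]
        rw [mul_assoc, mul_inv_cancel₀ (hsq i), mul_one]]
  have hOB' : OB * OBᵀ = 1 := mul_eq_one_comm.mp hOB
  have hOA' : OA * OAᵀ = 1 := mul_eq_one_comm.mp hOA
  have hΨ' : Ψ * Ψᵀ = 1 := mul_eq_one_comm.mp hΨ
  -- entrywise lemmas
  have hCC : Cᵀ * C = 1 := by
    ext i j
    have h := congrFun (congrFun hOA (e i)) (e j)
    simp only [Matrix.mul_apply, Matrix.transpose_apply, Matrix.one_apply,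
      EmbeddingLike.apply_eq_iff_eq] at h
    simp only [hCdef, Matrix.mul_apply, Matrix.transpose_apply, Matrix.submatrix_apply,
      id, Matrix.one_apply]
    exact h
  have hOC : OAᵀ * C = E := by
    ext i j
    have h := congrFun (congrFun hOA i) (e j)
    simp only [Matrix.mul_apply, Matrix.transpose_apply, Matrix.one_apply] at h
    simp only [hCdef, hEdef, Matrix.mul_apply, Matrix.transpose_apply,
      Matrix.submatrix_apply, id, Matrix.one_apply]
    exact h
  have hE : OA * E = C := by
    ext i j
    simp [hEdef, hCdef, Matrix.mul_apply, Matrix.one_apply, mul_ite, mul_one, mul_zero]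
  have hDE : D * E = E * De := by
    ext i j
    simp only [hDdef, hDedef, hEdef, Matrix.mul_apply, Matrix.diagonal_apply,
      Matrix.submatrix_apply, id, Matrix.one_apply, ite_mul, mul_ite, one_mul, mul_one,
      zero_mul, mul_zero, Finset.sum_ite_eq, Finset.sum_ite_eq', Finset.mem_univ, if_true]
    by_cases h : i = e j <;> simp [h]
  -- cancellation lemmas with arbitrary trailing factor
  have KOB : ∀ {n : Type} (Z : Matrix (Fin d) n ℝ), OBᵀ * (OB * Z) = Z := by
    intro n Z; rw [← Matrix.mul_assoc, hOB, Matrix.one_mul]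
  have KOB' : ∀ {n : Type} (Z : Matrix (Fin d) n ℝ), OB * (OBᵀ * Z) = Z := by
    intro n Z; rw [← Matrix.mul_assoc, hOB', Matrix.one_mul]
  have KST : ∀ {n : Type} (Z : Matrix (Fin d) n ℝ), S * (T * Z) = Z := by
    intro n Z; rw [← Matrix.mul_assoc, hST, Matrix.one_mul]
  have KTS : ∀ {n : Type} (Z : Matrix (Fin d) n ℝ), T * (S * Z) = Z := by
    intro n Z; rw [← Matrix.mul_assoc, hTS, Matrix.one_mul]
  have KMS : ∀ {n : Type} (Z : Matrix (Fin d) n ℝ), diagonal μ * (S * Z) = T * Z := by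
    intro n Z; rw [← Matrix.mul_assoc, hMS]
  have KΨ : ∀ {n : Type} (Z : Matrix (Fin r) n ℝ), Ψ * (Ψᵀ * Z) = Z := by
    intro n Z; rw [← Matrix.mul_assoc, hΨ', Matrix.one_mul]
  have KC : ∀ {n : Type} (Z : Matrix (Fin r) n ℝ), Cᵀ * (C * Z) = Z := by
    intro n Z; rw [← Matrix.mul_assoc, hCC, Matrix.one_mul]
  have core : OA * (D * (OAᵀ * C)) = C * De := by
    rw [hOC, hDE, ← Matrix.mul_assoc, hE]
  have KK : ∀ {n : Type} (Z : Matrix (Fin r) n ℝ),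
      OA * (D * (OAᵀ * (C * Z))) = C * (De * Z) := by
    intro n Z
    calc OA * (D * (OAᵀ * (C * Z))) = OA * (D * (OAᵀ * C)) * Z := by
          simp only [Matrix.mul_assoc]
      _ = C * De * Z := by rw [core]
      _ = C * (De * Z) := by rw [Matrix.mul_assoc]
  -- solve for A
  have hA2 : A = OB * (T * (OA * (D * (OAᵀ * (T * OBᵀ))))) := by
    have h := congrArg (fun Z => OB * (T * (Z * (T * OBᵀ)))) hAdec
    simp only [Matrix.mul_assoc] at h
    simp only [KST, KTS, hOB', Matrix.mul_one, KOB'] at h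
    exact h
  constructor
  · simp only [hX, hBdec, Matrix.transpose_mul, hSt, Matrix.mul_assoc]
    simp only [KOB, KMS, KST, KC]
    exact hΨ
  · simp only [hA2, hX, hBdec, Matrix.transpose_mul, hSt, Matrix.mul_assoc]
    simp only [KOB, KMS, KST, KTS, KΨ, KC, KK]
end

section
/- Let S ⊆ {1,…,d} with |S| = r−1, let i, j ∉ S with i ≠ j and λ̃_i ≠ λ̃_j, let c₁, c₂ be nonzero reals with c₁² + c₂² = 1, set φ = c₁ O^Ã_{:,i} + c₂ O^Ã_{:,j}, and let Ψ ∈ ℝ^{r×r} be orthogonal. Then X = O^B (Λ^B)^{-1/2} [O^Ã_{:,S}, φ] Ψ satisfies Xᵀ B X = I_r but (I_d − B X Xᵀ) A X ≠ 0; in particular (X, Xᵀ A X) is not an equilibrium of the GEV Lagrangian. -/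
open Matrix

/-- Let `S ⊆ {1,…,d}` with `|S| = r − 1` (encoded by an injection
`s : Fin (r-1) ↪ Fin d`), let `i, j ∉ S`, `i ≠ j`, `λ̃_i ≠ λ̃_j`, let `c₁, c₂` be nonzero
with `c₁² + c₂² = 1`, let `φ = c₁ O^Ã_{:,i} + c₂ O^Ã_{:,j}` and `Ψ` orthogonal.  Then
`X = O^B (Λ^B)^{-1/2} [O^Ã_{:,S}, φ] Ψ` is feasible (`Xᵀ B X = I_r`) but
`(I_d − B X Xᵀ) A X ≠ 0`; in particular `(X, Xᵀ A X)` is not an equilibrium of the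
GEV Lagrangian. -/
theorem gev_mixed_columns_not_equilibrium
    (d r : ℕ) (hd : 1 ≤ d) (hr : 1 ≤ r) (hrd : r ≤ d)
    (A B : Matrix (Fin d) (Fin d) ℝ) (hA : Aᵀ = A) (hB : B.PosDef)
    (OB : Matrix (Fin d) (Fin d) ℝ) (hOB : OBᵀ * OB = 1)
    (μ : Fin d → ℝ) (hμ : ∀ k, 0 < μ k)
    (hBdec : B = OB * diagonal μ * OBᵀ)
    (OA : Matrix (Fin d) (Fin d) ℝ) (hOA : OAᵀ * OA = 1)
    (lam : Fin d → ℝ) (hlam : ∀ k l : Fin d, k ≤ l → lam l ≤ lam k)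
    (hAdec : diagonal (fun k => (Real.sqrt (μ k))⁻¹) * OBᵀ * A * OB *
        diagonal (fun k => (Real.sqrt (μ k))⁻¹) = OA * diagonal lam * OAᵀ)
    (s : Fin (r - 1) ↪ Fin d) (i j : Fin d)
    (hi : i ∉ Set.range s) (hj : j ∉ Set.range s) (hij : i ≠ j)
    (hlamij : lam i ≠ lam j)
    (c₁ c₂ : ℝ) (hc₁ : c₁ ≠ 0) (hc₂ : c₂ ≠ 0) (hc : c₁ ^ 2 + c₂ ^ 2 = 1)
    (Ψ : Matrix (Fin r) (Fin r) ℝ) (hΨ : Ψᵀ * Ψ = 1)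
    (M : Matrix (Fin d) (Fin r) ℝ)
    (hM : M = Matrix.of fun p (k : Fin r) =>
      if h : (k : ℕ) < r - 1 then OA p (s ⟨k, h⟩) else c₁ * OA p i + c₂ * OA p j)
    (X : Matrix (Fin d) (Fin r) ℝ)
    (hX : X = OB * diagonal (fun k => (Real.sqrt (μ k))⁻¹) * M * Ψ) :
    Xᵀ * B * X = 1 ∧ (1 - B * X * Xᵀ) * A * X ≠ 0 ∧
      ¬(B * X * (Xᵀ * A * X) = A * X ∧ Xᵀ * B * X = 1) := by
  have hr1 : r - 1 < r := by omega
  set D := diagonal (fun k : Fin d => (Real.sqrt (μ k))⁻¹) with hDdef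
  set E := diagonal (fun k : Fin d => Real.sqrt (μ k)) with hEdef
  have hsq : ∀ k, Real.sqrt (μ k) ≠ 0 := fun k => (Real.sqrt_pos.mpr (hμ k)).ne'
  have hDT : Dᵀ = D := by rw [hDdef, diagonal_transpose]
  have hED : E * D = 1 := by
    have hfun : (fun k : Fin d => Real.sqrt (μ k) * (Real.sqrt (μ k))⁻¹) = fun _ => (1:ℝ) :=
      funext fun k => mul_inv_cancel₀ (hsq k)
    rw [hEdef, hDdef, diagonal_mul_diagonal, hfun, diagonal_one]
  have hDE : D * E = 1 := by
    have hfun : (fun k : Fin d => (Real.sqrt (μ k))⁻¹ * Real.sqrt (μ k)) = fun _ => (1:ℝ) :=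
      funext fun k => inv_mul_cancel₀ (hsq k)
    rw [hDdef, hEdef, diagonal_mul_diagonal, hfun, diagonal_one]
  have hμDE : diagonal μ * D = E := by
    have hfun : (fun k : Fin d => μ k * (Real.sqrt (μ k))⁻¹) = fun k => Real.sqrt (μ k) := by
      funext k
      rw [inv_eq_one_div, mul_one_div, eq_comm, eq_div_iff (hsq k)]
      exact Real.mul_self_sqrt (hμ k).le
    rw [hDdef, diagonal_mul_diagonal, hfun, hEdef]
  have hOB' : OB * OBᵀ = 1 := mul_eq_one_comm.mp hOB
  have hOA' : OA * OAᵀ = 1 := mul_eq_one_comm.mp hOA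
  have hΨ' : Ψ * Ψᵀ = 1 := mul_eq_one_comm.mp hΨ
  -- cancellation helpers
  have cOB : ∀ (n : Type) (Z : Matrix (Fin d) n ℝ), OBᵀ * (OB * Z) = Z := by
    intro n Z; rw [← Matrix.mul_assoc, hOB, Matrix.one_mul]
  have cOB' : ∀ (n : Type) (Z : Matrix (Fin d) n ℝ), OB * (OBᵀ * Z) = Z := by
    intro n Z; rw [← Matrix.mul_assoc, hOB', Matrix.one_mul]
  have cOA : ∀ (n : Type) (Z : Matrix (Fin d) n ℝ), OAᵀ * (OA * Z) = Z := by
    intro n Z; rw [← Matrix.mul_assoc, hOA, Matrix.one_mul]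
  have cED : ∀ (n : Type) (Z : Matrix (Fin d) n ℝ), E * (D * Z) = Z := by
    intro n Z; rw [← Matrix.mul_assoc, hED, Matrix.one_mul]
  have cDE : ∀ (n : Type) (Z : Matrix (Fin d) n ℝ), D * (E * Z) = Z := by
    intro n Z; rw [← Matrix.mul_assoc, hDE, Matrix.one_mul]
  have cμD : ∀ (n : Type) (Z : Matrix (Fin d) n ℝ), diagonal μ * (D * Z) = E * Z := by
    intro n Z; rw [← Matrix.mul_assoc, hμDE]
  -- the coordinate matrix P (columns of M in the OA basis)
  have hsi : ∀ y, s y ≠ i := fun y h => hi ⟨y, h⟩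
  have hsj : ∀ y, s y ≠ j := fun y h => hj ⟨y, h⟩
  set P : Matrix (Fin d) (Fin r) ℝ := Matrix.of (fun x (k : Fin r) =>
    if h : (k : ℕ) < r - 1 then (if x = s ⟨k, h⟩ then (1:ℝ) else 0)
    else c₁ * (if x = i then 1 else 0) + c₂ * (if x = j then 1 else 0)) with hPdef
  have hMP : M = OA * P := by
    rw [hM]; ext p k
    simp only [Matrix.mul_apply, Matrix.of_apply, hPdef]
    by_cases h : (k : ℕ) < r - 1
    · simp [h, mul_ite, mul_one, mul_zero, Finset.sum_ite_eq']
    · simp [h, mul_add, mul_ite, mul_one, mul_zero, Finset.sum_add_distrib,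
        Finset.sum_ite_eq', mul_comm]
  have hPcol : ∀ (a b : Fin r), (∑ x, P x a * P x b) = if a = b then (1:ℝ) else 0 := by
    intro a b
    by_cases ha : (a : ℕ) < r - 1 <;> by_cases hb : (b : ℕ) < r - 1
    · by_cases hab : a = b
      · subst hab
        simp [hPdef, dif_pos ha, ite_mul, Finset.sum_ite_eq']
      · have hv : (a : ℕ) ≠ (b : ℕ) := fun h => hab (Fin.ext h)
        simp [hPdef, dif_pos ha, dif_pos hb, ite_mul, Finset.sum_ite_eq', hab, hv, hv.symm]
    · have hab : a ≠ b := fun h => hb (h ▸ ha)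
      simp [hPdef, dif_pos ha, dif_neg hb, ite_mul, mul_add, mul_ite, mul_one, mul_zero,
        Finset.sum_add_distrib, Finset.sum_ite_eq',
        hsi ⟨(a : ℕ), ha⟩, (hsi ⟨(a : ℕ), ha⟩).symm,
        hsj ⟨(a : ℕ), ha⟩, (hsj ⟨(a : ℕ), ha⟩).symm, hab]
    · have hab : a ≠ b := fun h => ha (h ▸ hb)
      simp [hPdef, dif_neg ha, dif_pos hb, ite_mul, add_mul, mul_ite, mul_one, mul_zero,
        one_mul, zero_mul, Finset.sum_add_distrib, Finset.sum_ite_eq, Finset.sum_ite_eq',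
        hsi ⟨(b : ℕ), hb⟩, (hsi ⟨(b : ℕ), hb⟩).symm,
        hsj ⟨(b : ℕ), hb⟩, (hsj ⟨(b : ℕ), hb⟩).symm, hab]
    · have hab : a = b := by
        apply Fin.ext; have h1 := a.isLt; have h2 := b.isLt; omega
      subst hab
      simp only [hPdef, Matrix.of_apply, dif_neg ha, if_pos rfl]
      have hexp : ∀ x : Fin d,
          (c₁ * (if x = i then (1:ℝ) else 0) + c₂ * (if x = j then 1 else 0)) *
          (c₁ * (if x = i then (1:ℝ) else 0) + c₂ * (if x = j then 1 else 0))
          = c₁ ^ 2 * (if x = i then 1 else 0) + c₂ ^ 2 * (if x = j then 1 else 0) := by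
        intro x
        by_cases hxi : x = i
        · subst hxi; simp [hij]; ring
        · by_cases hxj : x = j
          · subst hxj; simp [Ne.symm hij, hxi]; ring
          · simp [hxi, hxj]
      rw [Finset.sum_congr rfl (fun x _ => hexp x)]
      simp [Finset.sum_add_distrib, mul_ite, mul_one, mul_zero, Finset.sum_ite_eq', hc]
  have hPP : Pᵀ * P = 1 := by
    ext a b
    rw [Matrix.mul_apply]
    simp only [Matrix.transpose_apply]
    rw [hPcol a b, Matrix.one_apply]
  have cP : ∀ (n : Type) (Z : Matrix (Fin r) n ℝ), Pᵀ * (P * Z) = Z := by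
    intro n Z; rw [← Matrix.mul_assoc, hPP, Matrix.one_mul]
  have cΨ' : ∀ (n : Type) (Z : Matrix (Fin r) n ℝ), Ψ * (Ψᵀ * Z) = Z := by
    intro n Z; rw [← Matrix.mul_assoc, hΨ', Matrix.one_mul]
  -- structural forms
  have hXT : Xᵀ = Ψᵀ * (Pᵀ * (OAᵀ * (D * OBᵀ))) := by
    rw [hX, hMP]
    simp only [Matrix.transpose_mul, hDT, Matrix.mul_assoc]
  have hA2 : A = OB * (E * ((OA * diagonal lam * OAᵀ) * (E * OBᵀ))) := by
    rw [← hAdec]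
    simp only [Matrix.mul_assoc, cED, cDE, hOB', Matrix.mul_one, cOB']
  have hAX : A * X = OB * (E * (OA * (diagonal lam * (P * Ψ)))) := by
    rw [hA2, hX, hMP]
    simp only [Matrix.mul_assoc, cOB, cED, cOA]
  have hBX : B * X = OB * (E * (OA * (P * Ψ))) := by
    rw [hBdec, hX, hMP]
    simp only [Matrix.mul_assoc, cOB, cμD, cOA]
  have hfeas : Xᵀ * B * X = 1 := by
    simp only [Matrix.mul_assoc]
    rw [hXT, hBX]
    simp only [Matrix.mul_assoc, cOB, cDE, cOA, cP]
    exact hΨ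
  -- the obstruction matrix
  set G : Matrix (Fin d) (Fin r) ℝ :=
    diagonal lam * P - P * (Pᵀ * (diagonal lam * P)) with hGdef
  have hN : (1 - B * X * Xᵀ) * A * X = OB * (E * (OA * (G * Ψ))) := by
    have e1 : (1 - B * X * Xᵀ) * A * X = A * X - (B * X) * (Xᵀ * (A * X)) := by
      simp only [Matrix.sub_mul, Matrix.one_mul, Matrix.mul_assoc]
    rw [e1, hAX, hBX, hXT, hGdef]
    simp only [Matrix.sub_mul, Matrix.mul_sub, Matrix.mul_assoc, cOB, cDE, cOA, cΨ']
  -- the key nonzero entry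
  have hPil : P i (⟨r - 1, hr1⟩ : Fin r) = c₁ := by
    simp [hPdef, hij]
  have hQ : (Pᵀ * (diagonal lam * P)) (⟨r - 1, hr1⟩ : Fin r) (⟨r - 1, hr1⟩ : Fin r)
      = c₁ ^ 2 * lam i + c₂ ^ 2 * lam j := by
    rw [Matrix.mul_apply]
    have hexp : ∀ x : Fin d, Pᵀ (⟨r - 1, hr1⟩ : Fin r) x *
        (diagonal lam * P) x (⟨r - 1, hr1⟩ : Fin r)
        = c₁ ^ 2 * lam i * (if x = i then 1 else 0)
          + c₂ ^ 2 * lam j * (if x = j then 1 else 0) := by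
      intro x
      rw [Matrix.transpose_apply, Matrix.diagonal_mul]
      by_cases hxi : x = i
      · subst hxi; simp [hPdef, hij]; ring
      · by_cases hxj : x = j
        · subst hxj; simp [hPdef, Ne.symm hij, hxi]; ring
        · simp [hPdef, hxi, hxj]
    rw [Finset.sum_congr rfl (fun x _ => hexp x)]
    simp [Finset.sum_add_distrib, mul_ite, mul_one, mul_zero, Finset.sum_ite_eq']
  have hGentry : G i (⟨r - 1, hr1⟩ : Fin r) = c₁ * c₂ ^ 2 * (lam i - lam j) := by
    have h2 : (P * (Pᵀ * (diagonal lam * P))) i (⟨r - 1, hr1⟩ : Fin r)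
        = c₁ * (c₁ ^ 2 * lam i + c₂ ^ 2 * lam j) := by
      rw [Matrix.mul_apply]
      rw [Finset.sum_eq_single (⟨r - 1, hr1⟩ : Fin r)]
      · rw [hQ, hPil]
      · intro k _ hk
        have hk' : (k : ℕ) < r - 1 := by
          have h1 := k.isLt
          by_contra hcon
          exact hk (Fin.ext (show (k : ℕ) = r - 1 by omega))
        have hz : P i k = 0 := by
          simp only [hPdef, Matrix.of_apply, dif_pos hk']
          exact if_neg (fun h => hsi _ h.symm)
        rw [hz, zero_mul]
      · intro h; exact absurd (Finset.mem_univ _) h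
    rw [hGdef, Matrix.sub_apply, Matrix.diagonal_mul, hPil, h2]
    linear_combination (-(c₁ * lam i)) * hc
  have hne : c₁ * c₂ ^ 2 * (lam i - lam j) ≠ 0 :=
    mul_ne_zero (mul_ne_zero hc₁ (pow_ne_zero 2 hc₂)) (sub_ne_zero.mpr hlamij)
  have hGne : G ≠ 0 := by
    intro h
    rw [h] at hGentry
    simp only [Matrix.zero_apply] at hGentry
    exact hne hGentry.symm
  have hneq : (1 - B * X * Xᵀ) * A * X ≠ 0 := by
    intro h0
    rw [hN] at h0
    apply hGne
    calc G = OAᵀ * (D * (OBᵀ * (OB * (E * (OA * (G * Ψ)))))) * Ψᵀ := by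
            simp only [Matrix.mul_assoc, cOB, cDE, cOA, hΨ', Matrix.mul_one]
      _ = OAᵀ * (D * (OBᵀ * (0 : Matrix (Fin d) (Fin r) ℝ))) * Ψᵀ := by rw [h0]
      _ = 0 := by simp only [Matrix.mul_zero, Matrix.zero_mul]
  refine ⟨hfeas, hneq, ?_⟩
  rintro ⟨heq, -⟩
  apply hneq
  calc (1 - B * X * Xᵀ) * A * X = A * X - B * X * (Xᵀ * A * X) := by
        simp only [Matrix.sub_mul, Matrix.one_mul, Matrix.mul_assoc]
    _ = 0 := by rw [heq, sub_self]
end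

section
/- Assume λ̃_r > λ̃_{r+1}. Let I ⊆ {1,…,d} be an r-element index set with I ≠ {1,…,r}, let Ψ ∈ ℝ^{r×r} be orthogonal, and let X = O^B (Λ^B)^{-1/2} O^Ã_{:,I} Ψ. Let m be the largest index in I and l the smallest index in {1,…,d} ∖ I (so l ≤ r < m). Then there exists V ∈ ℝ^{d×r} with Frobenius norm 1 such that q_X(V) ≤ 2(λ̃_m − λ̃_l) / ‖O^B (Λ^B)^{-1/2} O^Ã_{:,l}‖², and this upper bound is strictly negative; in particular the Hessian H_X has a negative eigenvalue, so (X, XᵀAX) is an unstable equilibrium. -/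
open Matrix

/-- `ℓ(X) = L(X, XᵀAX) = -2 tr(XᵀAX) + tr((XᵀAX)(XᵀBX))`. -/
noncomputable def gevEll (d r : ℕ) (A B : Matrix (Fin d) (Fin d) ℝ)
    (X : Matrix (Fin d) (Fin r) ℝ) : ℝ :=
  -2 * (Xᵀ * A * X).trace + ((Xᵀ * A * X) * (Xᵀ * B * X)).trace

/-- `q_X(V)`: the quadratic form of the Hessian `H_X` of `ℓ` at `X`, i.e. the second
derivative at `t = 0` of `t ↦ ℓ(X + tV)`. -/
noncomputable def gevHessQuad (d r : ℕ) (A B : Matrix (Fin d) (Fin d) ℝ)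
    (X V : Matrix (Fin d) (Fin r) ℝ) : ℝ :=
  iteratedDeriv 2 (fun t : ℝ => gevEll d r A B (X + t • V)) 0

/-!
The substitution `X = W Y Ψ` with `W = O^B (Λ^B)^{-1/2} O^Ã` satisfies `WᵀBW = 1` and
`WᵀAW = Λ^Ã`, so it turns `ℓ` into the same objective for the pair `(Λ^Ã, 1)`; right
multiplication by an orthogonal `Ψ` changes nothing. In these coordinates `X` is the matrix of
coordinate columns `e_i`, `i ∈ I`. Move its column `e_m` towards `e_l`: as `l ∉ I`, the
direction is `B`-orthogonal to `X`, the mixed term of the Hessian form vanishes, and what remains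
is `2(-2 λ̃_l + λ̃_l + λ̃_m) = 2(λ̃_m - λ̃_l)`, which is negative because `l ≤ r < m` and the eigengap
sits between `r` and `r + 1`. Normalising the direction back in the original coordinates costs
the factor `‖W e_l‖⁻²`.
-/

theorem iteratedDeriv_two_quartic_zero (a b c e f : ℝ) :
    iteratedDeriv 2 (fun t : ℝ => a + b * t + c * t ^ 2 + e * t ^ 3 + f * t ^ 4) 0 = 2 * c := by
  conv in b * _ => rw [← pow_one t]
  simp (discharger := fun_prop) only [iteratedDeriv_fun_add, iteratedDeriv_const_mul_field,
    iteratedDeriv_const, iteratedDeriv_fun_pow_zero]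
  norm_num [mul_comm]

theorem iteratedDeriv_two_trace_quadratic_pencil {n : Type*} [Fintype n]
    (S₀ S₁ S₂ T₀ T₁ T₂ : Matrix n n ℝ) :
    iteratedDeriv 2 (fun t : ℝ => -2 * (S₀ + t • S₁ + t ^ 2 • S₂).trace +
        ((S₀ + t • S₁ + t ^ 2 • S₂) * (T₀ + t • T₁ + t ^ 2 • T₂)).trace) 0 =
      2 * (-2 * S₂.trace + (S₀ * T₂).trace + (S₁ * T₁).trace + (S₂ * T₀).trace) := by
  have hquartic : (fun t : ℝ => -2 * (S₀ + t • S₁ + t ^ 2 • S₂).trace +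
      ((S₀ + t • S₁ + t ^ 2 • S₂) * (T₀ + t • T₁ + t ^ 2 • T₂)).trace) = fun t =>
      (-2 * S₀.trace + (S₀ * T₀).trace) +
      (-2 * S₁.trace + (S₀ * T₁).trace + (S₁ * T₀).trace) * t +
      (-2 * S₂.trace + (S₀ * T₂).trace + (S₁ * T₁).trace + (S₂ * T₀).trace) * t ^ 2 +
      ((S₁ * T₂).trace + (S₂ * T₁).trace) * t ^ 3 + (S₂ * T₂).trace * t ^ 4 := by
    funext t
    simp only [Matrix.add_mul, Matrix.mul_add, Matrix.smul_mul, Matrix.mul_smul, trace_add,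
      trace_smul, smul_eq_mul]
    ring
  rw [hquartic, iteratedDeriv_two_quartic_zero]

theorem gevHessQuad_eq {d r : ℕ} (A B : Matrix (Fin d) (Fin d) ℝ)
    (X V : Matrix (Fin d) (Fin r) ℝ) :
    gevHessQuad d r A B X V = 2 * (-2 * (Vᵀ * A * V).trace + ((Xᵀ * A * X) * (Vᵀ * B * V)).trace +
      ((Xᵀ * A * V + Vᵀ * A * X) * (Xᵀ * B * V + Vᵀ * B * X)).trace +
      ((Vᵀ * A * V) * (Xᵀ * B * X)).trace) := by
  have hexpand : ∀ (M : Matrix (Fin d) (Fin d) ℝ) (t : ℝ), (X + t • V)ᵀ * M * (X + t • V) =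
      Xᵀ * M * X + t • (Xᵀ * M * V + Vᵀ * M * X) + t ^ 2 • (Vᵀ * M * V) := by
    intro M t
    simp only [transpose_add, transpose_smul, Matrix.add_mul, Matrix.mul_add, Matrix.smul_mul,
      Matrix.mul_smul, smul_add, smul_smul, ← sq]
    abel
  simp only [gevHessQuad, gevEll, hexpand]
  exact iteratedDeriv_two_trace_quadratic_pencil ..

theorem gevEll_mul_mul {d d' r r' : ℕ} (A B : Matrix (Fin d) (Fin d) ℝ)
    (W : Matrix (Fin d) (Fin d') ℝ) (Y : Matrix (Fin d') (Fin r') ℝ)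
    {Ψ : Matrix (Fin r') (Fin r) ℝ} (hΨ : Ψ * Ψᵀ = 1) :
    gevEll d r A B (W * Y * Ψ) = gevEll d' r' (Wᵀ * A * W) (Wᵀ * B * W) Y := by
  have hconj : ∀ M : Matrix (Fin d) (Fin d) ℝ,
      (W * Y * Ψ)ᵀ * M * (W * Y * Ψ) = Ψᵀ * (Yᵀ * (Wᵀ * M * W) * Y) * Ψ := by
    intro M
    simp only [transpose_mul, Matrix.mul_assoc]
  have htrace : ∀ S : Matrix (Fin r') (Fin r') ℝ, (Ψᵀ * S * Ψ).trace = S.trace := by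
    intro S
    rw [trace_mul_comm, ← Matrix.mul_assoc, hΨ, Matrix.one_mul]
  have hmul : ∀ S T : Matrix (Fin r') (Fin r') ℝ,
      (Ψᵀ * S * Ψ) * (Ψᵀ * T * Ψ) = Ψᵀ * (S * T) * Ψ := by
    intro S T
    simp only [Matrix.mul_assoc]
    rw [← Matrix.mul_assoc Ψ, hΨ, Matrix.one_mul]
  simp only [gevEll, hconj, hmul, htrace]

theorem gevHessQuad_mul_mul {d d' r r' : ℕ} (A B : Matrix (Fin d) (Fin d) ℝ)
    (W : Matrix (Fin d) (Fin d') ℝ) (Y Z : Matrix (Fin d') (Fin r') ℝ)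
    {Ψ : Matrix (Fin r') (Fin r) ℝ} (hΨ : Ψ * Ψᵀ = 1) :
    gevHessQuad d r A B (W * Y * Ψ) (W * Z * Ψ) =
      gevHessQuad d' r' (Wᵀ * A * W) (Wᵀ * B * W) Y Z := by
  unfold gevHessQuad
  congr 1
  funext t
  rw [← gevEll_mul_mul A B W _ hΨ]
  simp only [Matrix.mul_add, Matrix.add_mul, Matrix.mul_smul, Matrix.smul_mul]

theorem gevHessQuad_diagonal_one_single {d r : ℕ} (lam : Fin d → ℝ) {σ : Fin r → Fin d}
    (hσ : Function.Injective σ) {l : Fin d} (hl : ∀ i, σ i ≠ l) (j : Fin r) (c : ℝ) :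
    gevHessQuad d r (diagonal lam) 1 ((1 : Matrix (Fin d) (Fin d) ℝ).submatrix id σ)
      (single l j c) = 2 * c ^ 2 * (lam (σ j) - lam l) := by
  set Y := (1 : Matrix (Fin d) (Fin d) ℝ).submatrix id σ
  have hYM : ∀ {n : Type} (M : Matrix (Fin d) n ℝ), Yᵀ * M = M.submatrix σ id := by
    intro n M
    simpa [Y, transpose_submatrix] using one_submatrix_mul σ (Equiv.refl _) M
  have hMY : ∀ {n : Type} (M : Matrix n (Fin d) ℝ), M * Y = M.submatrix id σ := by
    intro n M
    simpa using mul_submatrix_one (Equiv.refl _) σ M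
  have hYZ : Yᵀ * single l j c = 0 := by
    rw [hYM]
    ext i k
    simp [single_apply_of_row_ne (hl i).symm]
  have hZY : (single l j c)ᵀ * Y = 0 := by
    rw [← transpose_transpose Y, ← transpose_mul, hYZ, transpose_zero]
  have hYY : Yᵀ * Y = 1 := by
    rw [hYM, submatrix_submatrix]
    exact submatrix_one σ hσ
  have hYDY : Yᵀ * diagonal lam * Y = diagonal (lam ∘ σ) := by
    rw [Matrix.mul_assoc, hYM, hMY, submatrix_submatrix]
    exact submatrix_diagonal lam σ hσ
  rw [gevHessQuad_eq]
  simp only [Matrix.mul_one]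
  rw [hYZ, hZY, hYY, hYDY, transpose_single]
  simp only [single_mul_mul_single, single_mul_single_same, diagonal_apply_eq,
    trace_single_eq_same, trace_mul_single, Function.comp_apply, MulOpposite.smul_eq_mul_unop,
    MulOpposite.unop_op, add_zero, mul_zero, trace_zero, mul_one]
  ring

theorem transpose_mul_mul_eq_diagonal {n : Type*} [Fintype n] [DecidableEq n]
    (A OB OA : Matrix n n ℝ) (f lam : n → ℝ) (hOA : OAᵀ * OA = 1)
    (hAdec : diagonal f * OBᵀ * A * OB * diagonal f = OA * diagonal lam * OAᵀ) :
    (OB * diagonal f * OA)ᵀ * A * (OB * diagonal f * OA) = diagonal lam := by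
  have hconj : (OB * diagonal f * OA)ᵀ * A * (OB * diagonal f * OA) =
      OAᵀ * (diagonal f * OBᵀ * A * OB * diagonal f) * OA := by
    simp only [transpose_mul, diagonal_transpose, Matrix.mul_assoc]
  rw [hconj, hAdec, Matrix.mul_assoc, Matrix.mul_assoc, hOA, Matrix.mul_one, ← Matrix.mul_assoc,
    hOA, Matrix.one_mul]

theorem transpose_mul_mul_eq_one_of_diagonal_inv_sqrt {n : Type*} [Fintype n] [DecidableEq n]
    (OB OA : Matrix n n ℝ) {μ : n → ℝ} (hμ : ∀ k, 0 < μ k) (hOB : OBᵀ * OB = 1)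
    (hOA : OAᵀ * OA = 1) :
    (OB * diagonal (fun k => (Real.sqrt (μ k))⁻¹) * OA)ᵀ * (OB * diagonal μ * OBᵀ) *
      (OB * diagonal (fun k => (Real.sqrt (μ k))⁻¹) * OA) = 1 := by
  set D := diagonal (fun k => (Real.sqrt (μ k))⁻¹)
  have hscale : D * diagonal μ * D = 1 := by
    rw [diagonal_mul_diagonal, diagonal_mul_diagonal, ← diagonal_one]
    congr 1
    funext k
    have hk := Real.sqrt_pos.mpr (hμ k)
    field_simp
    exact (Real.sq_sqrt (hμ k).le).symm
  have hcancel : ∀ M : Matrix n n ℝ, OBᵀ * (OB * M) = M := fun M => by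
    rw [← Matrix.mul_assoc, hOB, Matrix.one_mul]
  have hconj : (OB * D * OA)ᵀ * (OB * diagonal μ * OBᵀ) * (OB * D * OA) =
      OAᵀ * (D * diagonal μ * D) * OA := by
    simp only [D, transpose_mul, diagonal_transpose, Matrix.mul_assoc, hcancel]
  rw [hconj, hscale, Matrix.mul_one, hOA]

theorem sum_sq_col_pos {m n : Type*} [Fintype m] (B : Matrix m m ℝ) (W : Matrix m n ℝ) {l : n}
    (h : (Wᵀ * B * W) l l ≠ 0) : 0 < ∑ p, W p l ^ 2 := by
  refine lt_of_le_of_ne (by positivity) fun hzero => h ?_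
  have hcol : ∀ p, W p l = 0 := fun p => by
    simpa using (Finset.sum_eq_zero_iff_of_nonneg fun p _ => sq_nonneg (W p l)).mp hzero.symm p
  simp [Matrix.mul_apply, hcol]

theorem sum_sq_mul_single_mul {m n o p : Type*} [Fintype m] [Fintype n] [Fintype o] [Fintype p]
    [DecidableEq n] [DecidableEq o] (W : Matrix m n ℝ) (l : n) (j : o) (c : ℝ)
    (Ψ : Matrix o p ℝ) :
    ∑ a, ∑ b, (W * single l j c * Ψ) a b ^ 2 = c ^ 2 * (∑ a, W a l ^ 2) * ∑ b, Ψ j b ^ 2 := by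
  have hentry : ∀ a b, (W * single l j c * Ψ) a b = W a l * c * Ψ j b := by
    intro a b
    rw [Matrix.mul_assoc, mul_apply, Finset.sum_eq_single l]
    · rw [single_mul_apply_same, mul_assoc]
    · intro q _ hq
      simp [single_mul_apply_of_ne _ _ _ _ _ hq]
    · simp
  simp only [hentry, mul_pow, Finset.mul_sum, Finset.sum_mul]
  rw [Finset.sum_comm]
  exact Finset.sum_congr rfl fun b _ => Finset.sum_congr rfl fun a _ => by ring

theorem Fin.le_max'_of_ne_filter_val_lt {d r : ℕ} {I : Finset (Fin d)} (hI : I.card = r)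
    (hIne : I ≠ Finset.univ.filter (fun k : Fin d => (k : ℕ) < r)) (hne : I.Nonempty) :
    r ≤ (I.max' hne : ℕ) := by
  by_contra! hlt
  refine hIne (Finset.eq_of_subset_of_card_le (fun k hk => ?_) ?_)
  · simpa using (Fin.le_def.mp (I.le_max' k hk)).trans_lt hlt
  · rw [Fin.card_filter_val_lt, hI]
    exact min_le_right _ _

theorem Fin.min'_compl_lt_of_ne_filter_val_lt {d r : ℕ} {I : Finset (Fin d)} (hI : I.card = r)
    (hIne : I ≠ Finset.univ.filter (fun k : Fin d => (k : ℕ) < r)) (hne : Iᶜ.Nonempty) :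
    ((Iᶜ.min' hne : Fin d) : ℕ) < r := by
  by_contra! hle
  have hr : r ≤ d := hI ▸ (Finset.card_le_univ I).trans_eq (Fintype.card_fin d)
  refine hIne (Finset.eq_of_subset_of_card_le (fun k hk => ?_) ?_).symm
  · by_contra hkI
    have hk : (k : ℕ) < r := by simpa using hk
    exact absurd (hle.trans (Fin.le_def.mp (Iᶜ.min'_le k (Finset.mem_compl.mpr hkI))))
      (not_le.mpr hk)
  · rw [Fin.card_filter_val_lt, hI, min_eq_right hr]

theorem apply_max'_lt_apply_min'_compl {d r : ℕ} (hrlt : r < d) {lam : Fin d → ℝ}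
    (hlam : Antitone lam) (hgap : lam ⟨r, hrlt⟩ < lam ⟨r - 1, (r.sub_le 1).trans_lt hrlt⟩)
    {I : Finset (Fin d)} (hI : I.card = r)
    (hIne : I ≠ Finset.univ.filter (fun k : Fin d => (k : ℕ) < r))
    (hne : I.Nonempty) (hne' : Iᶜ.Nonempty) : lam (I.max' hne) < lam (Iᶜ.min' hne') := by
  have hrm := Fin.le_max'_of_ne_filter_val_lt hI hIne hne
  have hlr := Fin.min'_compl_lt_of_ne_filter_val_lt hI hIne hne'
  calc lam (I.max' hne) ≤ lam ⟨r, hrlt⟩ := hlam (Fin.le_def.mpr hrm)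
    _ < lam ⟨r - 1, (r.sub_le 1).trans_lt hrlt⟩ := hgap
    _ ≤ lam (Iᶜ.min' hne') := hlam (Fin.le_def.mpr (Nat.le_sub_one_of_lt hlr))

/-- Assume the eigengap `λ̃_r > λ̃_{r+1}`.  If `I ≠ {1,…,r}` is an
`r`-element index set, `Ψ` is orthogonal and `X = O^B (Λ^B)^{-1/2} O^Ã_{:,I} Ψ`, then with
`m = max I` and `l = min Iᶜ`, there is a Frobenius-norm-one direction `V` with
`q_X(V) ≤ 2(λ̃_m − λ̃_l)/‖O^B (Λ^B)^{-1/2} O^Ã_{:,l}‖² < 0`; in particular the Hessian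
`H_X` has a negative eigenvalue, so `(X, XᵀAX)` is an unstable equilibrium. -/
theorem gev_unstable_equilibrium_negative_curvature
    (d r : ℕ) (hr : 1 ≤ r) (hrlt : r < d)
    (A B : Matrix (Fin d) (Fin d) ℝ)
    (OB : Matrix (Fin d) (Fin d) ℝ) (hOB : OBᵀ * OB = 1)
    (μ : Fin d → ℝ) (hμ : ∀ k, 0 < μ k)
    (hBdec : B = OB * diagonal μ * OBᵀ)
    (OA : Matrix (Fin d) (Fin d) ℝ) (hOA : OAᵀ * OA = 1)
    (lam : Fin d → ℝ) (hlam : ∀ k l : Fin d, k ≤ l → lam l ≤ lam k)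
    (hgap : lam ⟨r, hrlt⟩ < lam ⟨r - 1, by omega⟩)
    (hAdec : diagonal (fun k => (Real.sqrt (μ k))⁻¹) * OBᵀ * A * OB *
        diagonal (fun k => (Real.sqrt (μ k))⁻¹) = OA * diagonal lam * OAᵀ)
    (I : Finset (Fin d)) (hI : I.card = r)
    (hIne : I ≠ Finset.univ.filter (fun k : Fin d => (k : ℕ) < r))
    (Ψ : Matrix (Fin r) (Fin r) ℝ) (hΨ : Ψᵀ * Ψ = 1)
    (X : Matrix (Fin d) (Fin r) ℝ)
    (hX : X = OB * diagonal (fun k => (Real.sqrt (μ k))⁻¹) *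
        OA.submatrix id (fun k => ((I.orderIsoOfFin hI k) : Fin d)) * Ψ)
    (m : Fin d) (hm : m = I.max' (Finset.card_pos.mp (by rw [hI]; omega)))
    (l : Fin d)
    (hl : l = Iᶜ.min' (Finset.card_pos.mp
      (by rw [Finset.card_compl, hI, Fintype.card_fin]; omega)))
    (nsq : ℝ)
    (hnsq : nsq = ∑ p : Fin d,
      ((OB * diagonal (fun k => (Real.sqrt (μ k))⁻¹) * OA) p l) ^ 2) :
    ∃ V : Matrix (Fin d) (Fin r) ℝ, (∑ p : Fin d, ∑ k : Fin r, V p k ^ 2 = 1) ∧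
      gevHessQuad d r A B X V ≤ 2 * (lam m - lam l) / nsq ∧
      2 * (lam m - lam l) / nsq < 0 := by
  set W := OB * diagonal (fun k => (Real.sqrt (μ k))⁻¹) * OA
  set σ : Fin r → Fin d := fun k => (I.orderIsoOfFin hI k : Fin d)
  have hσ : Function.Injective σ := fun a b h => (I.orderIsoOfFin hI).injective (Subtype.ext h)
  have hσl : ∀ i, σ i ≠ l := fun i h =>
    Finset.mem_compl.mp (hl ▸ Finset.min'_mem _ _) (h ▸ (I.orderIsoOfFin hI i).2)
  obtain ⟨j, hj⟩ : ∃ j, σ j = m :=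
    ⟨_, congrArg Subtype.val ((I.orderIsoOfFin hI).apply_symm_apply ⟨m, hm ▸ I.max'_mem _⟩)⟩
  have hml : lam m < lam l := hm ▸ hl ▸ apply_max'_lt_apply_min'_compl hrlt hlam hgap hI hIne _ _
  have hWA : Wᵀ * A * W = diagonal lam := transpose_mul_mul_eq_diagonal A OB OA _ lam hOA hAdec
  have hWB : Wᵀ * B * W = 1 :=
    hBdec ▸ transpose_mul_mul_eq_one_of_diagonal_inv_sqrt OB OA hμ hOB hOA
  have hnsq_pos : 0 < nsq := hnsq ▸ sum_sq_col_pos B W (by simp [hWB])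
  have hXW : X = W * (1 : Matrix (Fin d) (Fin d) ℝ).submatrix id σ * Ψ := by
    have hsub : OA.submatrix id σ = OA * (1 : Matrix (Fin d) (Fin d) ℝ).submatrix id σ := by
      simpa using (mul_submatrix_one (Equiv.refl _) σ OA).symm
    rw [hX, hsub, Matrix.mul_assoc _ OA]
  have hΨ' : Ψ * Ψᵀ = 1 := mul_eq_one_comm.mp hΨ
  have hrow : ∑ k, Ψ j k ^ 2 = 1 := by simpa [mul_apply, sq] using congrFun₂ hΨ' j j
  set c := (Real.sqrt nsq)⁻¹
  have hc : c ^ 2 = nsq⁻¹ := by rw [inv_pow, Real.sq_sqrt hnsq_pos.le]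
  refine ⟨W * single l j c * Ψ, ?_, le_of_eq ?_, div_neg_of_neg_of_pos (by linarith) hnsq_pos⟩
  · rw [sum_sq_mul_single_mul, ← hnsq, hrow, hc, mul_one, inv_mul_cancel₀ hnsq_pos.ne']
  · rw [hXW, gevHessQuad_mul_mul A B W _ _ hΨ', hWA, hWB,
      gevHessQuad_diagonal_one_single lam hσ hσl, hj, hc]
    ring
end

section
/- Let A ∈ ℝ^{d×d} be symmetric and B ∈ ℝ^{d×d} be symmetric positive semidefinite, and suppose the feasible set T_B = {X ∈ ℝ^{d×r} : Xᵀ B X = I_r} is nonempty. If there exists v ∈ ℝ^d with B v = 0 and vᵀ A v > 0, then the objective X ↦ −tr(Xᵀ A X) is unbounded below on T_B: for every M ∈ ℝ there exists X ∈ T_B with tr(Xᵀ A X) > M. -/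
open Matrix

set_option maxHeartbeats 1000000

/-- Let `A` be symmetric and `B` symmetric positive semidefinite with
nonempty feasible set `T_B = {X : Xᵀ B X = I_r}`.  If some `v` satisfies `B v = 0` and
`vᵀ A v > 0`, then `X ↦ −tr(Xᵀ A X)` is unbounded below on `T_B`: for every `M` there is
a feasible `X` with `tr(Xᵀ A X) > M`. -/
theorem gev_unbounded_of_null_direction
    (d r : ℕ) (hd : 1 ≤ d) (hr : 1 ≤ r) (hrd : r ≤ d)
    (A B : Matrix (Fin d) (Fin d) ℝ) (hA : Aᵀ = A) (hB : B.PosSemidef)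
    (hfeas : ∃ X : Matrix (Fin d) (Fin r) ℝ, Xᵀ * B * X = 1)
    (v : Fin d → ℝ) (hv : B *ᵥ v = 0) (hvA : 0 < v ⬝ᵥ (A *ᵥ v)) :
    ∀ M : ℝ, ∃ X : Matrix (Fin d) (Fin r) ℝ, Xᵀ * B * X = 1 ∧
      M < (Xᵀ * A * X).trace := by
  intro M
  obtain ⟨X₀, hX₀⟩ := hfeas
  have hBt : Bᵀ = B := hB.1
  set z : Fin r := ⟨0, hr⟩ with hz
  set V : Matrix (Fin d) (Fin r) ℝ := Matrix.of (fun i j => if j = z then v i else 0) with hV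
  have hBV : B * V = 0 := by
    ext i j
    have := congrFun hv i
    simp only [Matrix.mul_apply, hV, Matrix.of_apply, mul_ite, mul_zero, Matrix.zero_apply]
    rw [Finset.sum_ite_irrel]
    simp only [Finset.sum_const_zero]
    split
    · simpa [Matrix.mulVec, dotProduct] using this
    · rfl
  have hVB : Vᵀ * B = 0 := by
    have : (Vᵀ * B)ᵀ = 0 := by
      rw [Matrix.transpose_mul, Matrix.transpose_transpose, hBt, hBV]
    calc Vᵀ * B = ((Vᵀ * B)ᵀ)ᵀ := by rw [Matrix.transpose_transpose]
      _ = 0 := by rw [this]; simp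
  have ha : (Vᵀ * A * V).trace = v ⬝ᵥ (A *ᵥ v) := by
    simp only [Matrix.trace, Matrix.diag, Matrix.mul_apply, Matrix.transpose_apply, hV,
      Matrix.of_apply, dotProduct, Matrix.mulVec, ite_mul, mul_ite, zero_mul, mul_zero,
      Finset.sum_ite_irrel, Finset.sum_const_zero, Finset.sum_ite_eq', Finset.mem_univ, if_true,
      Finset.mul_sum]
    simp only [Finset.sum_mul]
    rw [Finset.sum_comm]
    exact Finset.sum_congr rfl fun _ _ => Finset.sum_congr rfl fun _ _ => by ring
  set a : ℝ := v ⬝ᵥ (A *ᵥ v)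
  set b : ℝ := (Vᵀ * A * X₀).trace + (X₀ᵀ * A * V).trace
  set c : ℝ := (X₀ᵀ * A * X₀).trace
  set t : ℝ := max 1 ((|b| + |M| + |c| + 1) / a) with hts
  have ht1 : (1 : ℝ) ≤ t := le_max_left _ _
  have hta : |b| + |M| + |c| + 1 ≤ t * a := by
    have := le_max_right 1 ((|b| + |M| + |c| + 1) / a)
    rw [div_le_iff₀ hvA] at this
    exact this
  refine ⟨X₀ + t • V, ?_, ?_⟩
  · have h1 : (X₀ + t • V)ᵀ * B = X₀ᵀ * B := by
      rw [Matrix.transpose_add, Matrix.transpose_smul, Matrix.add_mul, Matrix.smul_mul, hVB]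
      simp
    rw [h1, Matrix.mul_add, Matrix.mul_smul, Matrix.mul_assoc X₀ᵀ B V, hBV, hX₀]
    simp
  · have hexp : ((X₀ + t • V)ᵀ * A * (X₀ + t • V)).trace = c + t * b + t * t * a := by
      have : (X₀ + t • V)ᵀ * A * (X₀ + t • V)
          = X₀ᵀ * A * X₀ + t • (Vᵀ * A * X₀) + t • (X₀ᵀ * A * V) + (t * t) • (Vᵀ * A * V) := by
        simp only [Matrix.transpose_add, Matrix.transpose_smul, Matrix.add_mul, Matrix.mul_add,
          Matrix.smul_mul, Matrix.mul_smul, smul_smul, smul_add]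
        abel
      rw [this]
      simp only [Matrix.trace_add, Matrix.trace_smul, smul_eq_mul, ha]
      ring
    rw [hexp]
    nlinarith [le_abs_self b, neg_abs_le b, le_abs_self M, neg_abs_le M, le_abs_self c,
      neg_abs_le c, abs_nonneg b, abs_nonneg M, abs_nonneg c,
      mul_le_mul_of_nonneg_left hta (le_trans zero_le_one ht1)]
end

section
/- Let A ∈ ℝ^{d×d} be symmetric and invertible, and let B ∈ ℝ^{d×d} be symmetric positive semidefinite with rank(B) ≥ r (so T_B ≠ ∅). Then the problem min over X ∈ T_B of −tr(Xᵀ A X) admits a minimizer (i.e. the infimum is attained) if and only if for every v ∈ ℝ^d with B v = 0, either vᵀ A v < 0, or (vᵀ A v = 0 and uᵀ A v = 0 for every u in the column space of B). -/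
open Matrix

/-
If `X` maximizes `tr(Xᵀ A X)` on `T_B` and `B v = 0`, then `X + t v aᵀ` stays in `T_B` for all
`t`, and the objective along this line is the quadratic `tr(Xᵀ A X) + 2t aᵀXᵀAv + t²|a|² vᵀAv`.
Boundedness forces `vᵀAv ≤ 0`, and when `vᵀAv = 0` it forces `XᵀAv = 0` for *every* feasible `X`.
Since the columns of the feasible matrices reach every direction (replace one column of a feasible
frame by a normalized vector `B`-orthogonal to the others), this means `Av = 0`.

Conversely, the condition together with the invertibility of `A` makes `A` negative definite on
`Null(B)`. Split `ℝᵈ = S ⊕ Null(B)` with `S` the `A`-orthogonal complement of `Null(B)`, and let `P`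
be the projection onto `S`. Then `X ↦ P X` preserves feasibility and does not decrease the
objective, and the feasible matrices with columns in `S` form a compact set, because `B` is
positive definite on `S`. A maximizer over this compact set is a global maximizer.
-/

lemma nonpos_of_forall_mul_sq_add_mul_le {a b c : ℝ} (h : ∀ t : ℝ, a * t ^ 2 + b * t ≤ c) :
    a ≤ 0 := by
  have hd : discrim (-a) (-b) c ≤ 0 := discrim_le_zero fun t => by nlinarith [h t]
  unfold discrim at hd
  by_contra! ha
  nlinarith [h 0, h 1, h (-1)]

lemma eq_zero_of_forall_mul_sq_add_mul_le {a b c : ℝ} (h : ∀ t : ℝ, a * t ^ 2 + b * t ≤ c)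
    (hac : a * c = 0) : b = 0 := by
  have hd : discrim (-a) (-b) c ≤ 0 := discrim_le_zero fun t => by nlinarith [h t]
  unfold discrim at hd
  nlinarith [sq_nonneg b]

namespace Matrix

lemma updateCol_eq_add_vecMulVec {R m n : Type*} [Ring R] [DecidableEq n] (X : Matrix m n R)
    (j : n) (y : m → R) :
    X.updateCol j y = X + vecMulVec (y - X.col j) (Pi.single j 1) := by
  ext i k
  rcases eq_or_ne k j with rfl | hk
  · simp [vecMulVec_apply]
  · simp [vecMulVec_apply, hk]

variable {R m n : Type*} [CommRing R] [Fintype m] {A B : Matrix m m ℝ}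

lemma dotProduct_mulVec_comm {M : Matrix m m R} (hM : Mᵀ = M)
    (x y : m → R) : x ⬝ᵥ (M *ᵥ y) = y ⬝ᵥ (M *ᵥ x) := by
  rw [dotProduct_mulVec, ← mulVec_transpose, hM, dotProduct_comm]

lemma col_dotProduct (X : Matrix m n R) (j : n) (z : m → R) : X.col j ⬝ᵥ z = (Xᵀ *ᵥ z) j := by
  rw [mulVec_transpose, dotProduct_comm]
  rfl

lemma transpose_mul_mul_apply {l : Type*} (X : Matrix m n R) (M : Matrix m m R)
    (Y : Matrix m l R) (i : n) (j : l) :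
    (Xᵀ * M * Y) i j = X.col i ⬝ᵥ (M *ᵥ Y.col j) := by
  rw [Matrix.mul_assoc]
  rfl

lemma transpose_mul_mul_add_vecMulVec {M : Matrix m m R} (hM : Mᵀ = M)
    (X : Matrix m n R) (w : m → R) (a : n → R) :
    (X + vecMulVec w a)ᵀ * M * (X + vecMulVec w a) =
      Xᵀ * M * X + vecMulVec (Xᵀ *ᵥ (M *ᵥ w)) a + vecMulVec a (Xᵀ *ᵥ (M *ᵥ w)) +
        (w ⬝ᵥ (M *ᵥ w)) • vecMulVec a a := by
  have hwM : w ᵥ* M = M *ᵥ w := by rw [← vecMul_transpose, hM]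
  simp only [transpose_add, transpose_vecMulVec, Matrix.add_mul, Matrix.mul_add, Matrix.mul_assoc,
    mul_vecMulVec, vecMulVec_mul, hwM, mulVec_mulVec, ← mulVec_transpose]
  rw [add_mulVec, vecMulVec_mulVec, op_smul_eq_smul, add_vecMulVec, smul_vecMulVec,
    dotProduct_comm (M *ᵥ w)]
  abel

lemma transpose_mul_mul_of_mul_eq {B P : Matrix m m R} (hB : Bᵀ = B) (hBP : B * P = B)
    (X : Matrix m n R) : (P * X)ᵀ * B * (P * X) = Xᵀ * B * X := by
  have hPB : Pᵀ * B = B := by simpa [hB] using congrArg transpose hBP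
  rw [transpose_mul, Matrix.mul_assoc, Matrix.mul_assoc, ← Matrix.mul_assoc B, hBP,
    ← Matrix.mul_assoc Pᵀ, hPB, Matrix.mul_assoc]

lemma isCompact_setOf_transpose_mul_self_eq_one [DecidableEq n] :
    IsCompact {Q : Matrix m n ℝ | Qᵀ * Q = 1} := by
  refine (isCompact_univ_pi fun _ => isCompact_univ_pi fun _ => isCompact_Icc (a := -1) (b := 1))
    |>.of_isClosed_subset (isClosed_eq (by fun_prop) continuous_const)
      fun (Q : Matrix m n ℝ) (hQ : Qᵀ * Q = 1) => ?_
  refine Set.mem_univ_pi.mpr fun i => Set.mem_univ_pi.mpr fun j => ?_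
  rw [Set.mem_Icc, ← abs_le]
  have hjj : ∑ k, Q k j ^ 2 = 1 := by
    simpa [mul_apply, sq] using congrFun (congrFun hQ j) j
  have : Q i j ^ 2 ≤ 1 :=
    hjj ▸ Finset.single_le_sum (fun k _ => sq_nonneg (Q k j)) (Finset.mem_univ i)
  exact abs_le_one_iff_mul_self_le_one.mpr (by nlinarith)

open scoped MatrixOrder in
lemma isCompact_setOf_transpose_mul_mul_eq_one [DecidableEq m] [DecidableEq n] {G : Matrix m m ℝ}
    (hG : G.PosDef) :
    IsCompact {X : Matrix m n ℝ | Xᵀ * G * X = 1} := by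
  set L := CFC.sqrt G
  have hL : Lᵀ * L = G := by
    have hLs : Lᵀ = L := (CFC.sqrt_nonneg G).posSemidef.isHermitian
    rw [hLs, CFC.sqrt_mul_sqrt_self G hG.posSemidef.nonneg]
  have hLdet : IsUnit L.det := isUnit_iff_ne_zero.mpr fun h0 =>
    hG.det_pos.ne' (by rw [← hL, det_mul, det_transpose, h0, mul_zero])
  refine (isCompact_setOf_transpose_mul_self_eq_one.image (f := (L⁻¹ * ·)) (by fun_prop))
    |>.of_isClosed_subset (isClosed_eq (by fun_prop) continuous_const) fun X hX => ?_
  refine ⟨L * X, ?_, nonsing_inv_mul_cancel_left L X hLdet⟩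
  change (L * X)ᵀ * (L * X) = 1
  rw [transpose_mul, Matrix.mul_assoc, ← Matrix.mul_assoc Lᵀ, hL,
    ← Matrix.mul_assoc, hX]

variable [Fintype n]

lemma transpose_mul_mul_updateCol [DecidableEq n] {B : Matrix m m R} {X : Matrix m n R}
    (hB : Bᵀ = B) (hX : Xᵀ * B * X = 1) (j : n) {y : m → R} {κ : R}
    (hXy : Xᵀ *ᵥ (B *ᵥ y) = κ • Pi.single j 1) (hy : y ⬝ᵥ (B *ᵥ y) = 1) :
    (X.updateCol j y)ᵀ * B * X.updateCol j y = 1 := by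
  have hc : Xᵀ *ᵥ (B *ᵥ (y - X.col j)) = (κ - 1) • Pi.single j 1 := by
    rw [mulVec_sub, mulVec_sub, hXy, ← mulVec_single_one, mulVec_mulVec, mulVec_mulVec, hX,
      one_mulVec, sub_smul, one_smul]
  have hw : (y - X.col j) ⬝ᵥ (B *ᵥ (y - X.col j)) = 2 - 2 * κ := by
    rw [sub_dotProduct, col_dotProduct, hc, mulVec_sub, dotProduct_sub, hy,
      dotProduct_mulVec_comm hB, col_dotProduct, hXy]
    simp only [Pi.smul_apply, Pi.single_eq_same, smul_eq_mul]
    ring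
  rw [updateCol_eq_add_vecMulVec, transpose_mul_mul_add_vecMulVec hB, hX, hc, hw, smul_vecMulVec,
    vecMulVec_smul]
  module

lemma trace_transpose_mul_mul_nonpos {C : Matrix m m ℝ} (hC : ∀ x, x ⬝ᵥ (C *ᵥ x) ≤ 0)
    (X : Matrix m n ℝ) : (Xᵀ * C * X).trace ≤ 0 :=
  Finset.sum_nonpos fun j _ => (transpose_mul_mul_apply X C X j j).trans_le (hC _)

lemma forall_mul_sq_add_mul_le_of_forall_trace_le [DecidableEq n] {M : ℝ} (hA : Aᵀ = A)
    (hB : Bᵀ = B) (hbdd : ∀ X : Matrix m n ℝ, Xᵀ * B * X = 1 → (Xᵀ * A * X).trace ≤ M)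
    {X : Matrix m n ℝ} (hX : Xᵀ * B * X = 1) {v : m → ℝ} (hv : B *ᵥ v = 0) (a : n → ℝ) (t : ℝ) :
    (a ⬝ᵥ a * (v ⬝ᵥ (A *ᵥ v))) * t ^ 2 + (2 * (a ⬝ᵥ (Xᵀ *ᵥ (A *ᵥ v)))) * t ≤
      M - (Xᵀ * A * X).trace := by
  have hfeas : (X + vecMulVec (t • v) a)ᵀ * B * (X + vecMulVec (t • v) a) = 1 := by
    simp only [transpose_mul_mul_add_vecMulVec hB, mulVec_smul, hv, smul_zero, mulVec_zero,
      zero_vecMulVec, vecMulVec_zero, dotProduct_zero, zero_smul, add_zero, hX]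
  have := hbdd _ hfeas
  rw [transpose_mul_mul_add_vecMulVec hA] at this
  simp only [trace_add, trace_smul, trace_vecMulVec, mulVec_smul, dotProduct_smul, smul_dotProduct,
    smul_eq_mul, dotProduct_comm (Xᵀ *ᵥ (A *ᵥ v)) a] at this
  linarith

lemma exists_dotProduct_ne_zero_of_transpose_mulVec_eq_zero [DecidableEq n] (hB : B.PosSemidef)
    {X : Matrix m n ℝ} (hX : Xᵀ * B * X = 1) (j : n) {z : m → ℝ} (hXz : Xᵀ *ᵥ z = 0) (hz : z ≠ 0) :
    ∃ (y : m → ℝ) (κ : ℝ), Xᵀ *ᵥ (B *ᵥ y) = κ • Pi.single j 1 ∧ y ⬝ᵥ (B *ᵥ y) = 1 ∧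
      y ⬝ᵥ z ≠ 0 := by
  have hBs : Bᵀ = B := hB.isHermitian
  have hXX (w : n → ℝ) : Xᵀ *ᵥ (B *ᵥ (X *ᵥ w)) = w := by
    rw [mulVec_mulVec, mulVec_mulVec, hX, one_mulVec]
  set u := z - X *ᵥ (Xᵀ *ᵥ (B *ᵥ z))
  have hXu : Xᵀ *ᵥ (B *ᵥ u) = 0 := by rw [mulVec_sub, mulVec_sub, hXX, sub_self]
  have huz : u ⬝ᵥ z = z ⬝ᵥ z := by
    rw [sub_dotProduct, dotProduct_comm (X *ᵥ _), dotProduct_mulVec, ← mulVec_transpose, hXz,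
      zero_dotProduct, sub_zero]
  set β := u ⬝ᵥ (B *ᵥ u)
  have hβ : 0 ≤ β := by simpa using hB.dotProduct_mulVec_nonneg u
  set γ := (√(1 + β))⁻¹
  have hγβ : γ ^ 2 * (1 + β) = 1 := by
    rw [inv_pow, Real.sq_sqrt (by linarith), inv_mul_cancel₀ (by linarith)]
  have hXcol : Xᵀ *ᵥ (B *ᵥ X.col j) = Pi.single j 1 := by rw [← mulVec_single_one, hXX]
  have hcu : X.col j ⬝ᵥ (B *ᵥ u) = 0 := by rw [col_dotProduct, hXu, Pi.zero_apply]
  have hcc : X.col j ⬝ᵥ (B *ᵥ X.col j) = 1 := by rw [col_dotProduct, hXcol, Pi.single_eq_same]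
  have hcz : X.col j ⬝ᵥ z = 0 := by rw [col_dotProduct, hXz, Pi.zero_apply]
  refine ⟨γ • (X.col j + u), γ, ?_, ?_, ?_⟩
  · rw [mulVec_smul, mulVec_smul, mulVec_add, mulVec_add, hXcol, hXu, add_zero]
  · simp only [mulVec_smul, mulVec_add, dotProduct_smul, smul_dotProduct, dotProduct_add,
      add_dotProduct, hcu, hcc, dotProduct_mulVec_comm hBs u, smul_eq_mul]
    linear_combination hγβ
  · rw [smul_dotProduct, add_dotProduct, hcz, huz, zero_add, smul_eq_mul]
    exact mul_ne_zero (by positivity) (by simpa using hz)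

lemma eq_zero_of_forall_transpose_mulVec_eq_zero [DecidableEq n] [Nonempty n]
    (hB : B.PosSemidef) {X₀ : Matrix m n ℝ} (hX₀ : X₀ᵀ * B * X₀ = 1) {z : m → ℝ}
    (h : ∀ X : Matrix m n ℝ, Xᵀ * B * X = 1 → Xᵀ *ᵥ z = 0) : z = 0 := by
  obtain ⟨j⟩ := ‹Nonempty n›
  by_contra hz
  obtain ⟨y, κ, hXy, hy, hyz⟩ := exists_dotProduct_ne_zero_of_transpose_mulVec_eq_zero hB hX₀ j
    (h X₀ hX₀) hz
  have := congrFun (h _ (transpose_mul_mul_updateCol hB.isHermitian hX₀ j hXy hy)) j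
  rw [← updateRow_transpose, mulVec, updateRow_self] at this
  exact hyz this

lemma dotProduct_mulVec_nonpos_of_forall_trace_le [DecidableEq n] [Nonempty n] {M : ℝ}
    (hA : Aᵀ = A) (hB : Bᵀ = B) (hbdd : ∀ X : Matrix m n ℝ, Xᵀ * B * X = 1 → (Xᵀ * A * X).trace ≤ M)
    {X₀ : Matrix m n ℝ} (hX₀ : X₀ᵀ * B * X₀ = 1) {v : m → ℝ} (hv : B *ᵥ v = 0) :
    v ⬝ᵥ (A *ᵥ v) ≤ 0 := by
  obtain ⟨j⟩ := ‹Nonempty n›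
  simpa using nonpos_of_forall_mul_sq_add_mul_le
    (forall_mul_sq_add_mul_le_of_forall_trace_le hA hB hbdd hX₀ hv (Pi.single j 1))

lemma mulVec_eq_zero_of_forall_trace_le [DecidableEq n] [Nonempty n] {M : ℝ} (hA : Aᵀ = A)
    (hB : B.PosSemidef) (hbdd : ∀ X : Matrix m n ℝ, Xᵀ * B * X = 1 → (Xᵀ * A * X).trace ≤ M)
    {X₀ : Matrix m n ℝ} (hX₀ : X₀ᵀ * B * X₀ = 1) {v : m → ℝ} (hv : B *ᵥ v = 0)
    (hq : v ⬝ᵥ (A *ᵥ v) = 0) : A *ᵥ v = 0 := by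
  refine eq_zero_of_forall_transpose_mulVec_eq_zero hB hX₀ fun X hX => ?_
  have := eq_zero_of_forall_mul_sq_add_mul_le
    (forall_mul_sq_add_mul_le_of_forall_trace_le hA hB.isHermitian hbdd hX hv (Xᵀ *ᵥ (A *ᵥ v)))
    (by rw [hq, mul_zero, zero_mul])
  simpa using this

lemma mulVec_eq_zero_of_isotropic (hA : Aᵀ = A) (hB : Bᵀ = B)
    (hnonpos : ∀ x, B *ᵥ x = 0 → x ⬝ᵥ (A *ᵥ x) ≤ 0) {v : m → ℝ} (hv : B *ᵥ v = 0)
    (hq : v ⬝ᵥ (A *ᵥ v) = 0) (hw : ∀ w, (B *ᵥ w) ⬝ᵥ (A *ᵥ v) = 0) : A *ᵥ v = 0 := by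
  have hker (x : m → ℝ) (hx : B *ᵥ x = 0) : x ⬝ᵥ (A *ᵥ v) = 0 := by
    have h2 : 2 * (x ⬝ᵥ (A *ᵥ v)) = 0 := by
      refine eq_zero_of_forall_mul_sq_add_mul_le (a := x ⬝ᵥ (A *ᵥ x)) (c := 0)
        (fun t => ?_) (mul_zero _)
      have := hnonpos (v + t • x) (by rw [mulVec_add, mulVec_smul, hv, hx, smul_zero, add_zero])
      simp only [mulVec_add, mulVec_smul, dotProduct_add, add_dotProduct, dotProduct_smul,
        smul_dotProduct, smul_eq_mul, hq, dotProduct_mulVec_comm hA v x] at this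
      linarith
    linarith
  have hBAv : B *ᵥ (A *ᵥ v) = 0 := dotProduct_self_eq_zero.mp <| by
    rw [dotProduct_mulVec_comm hB, dotProduct_comm]
    exact hw _
  exact dotProduct_self_eq_zero.mp (hker _ hBAv)

variable [DecidableEq m]

lemma exists_projection_of_negDef (hA : Aᵀ = A)
    (hneg : ∀ v, B *ᵥ v = 0 → v ≠ 0 → v ⬝ᵥ (A *ᵥ v) < 0) :
    ∃ P : Matrix m m ℝ, B * P = B ∧ P * P = P ∧ (1 - P)ᵀ * A * P = 0 ∧
      ∀ x, B *ᵥ x = 0 → P *ᵥ x = 0 := by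
  set N := LinearMap.ker B.mulVecLin
  set β := toBilin' A
  have hrefl : β.IsRefl := (isSymm_toBilin'_iff_isSymm.mpr hA).isRefl
  have hnd : (β.restrict N).Nondegenerate := by
    have key (x : N) (hx : β.restrict N x x = 0) : x = 0 := by
      by_contra hne
      refine (hneg x x.2 (by simpa using hne)).ne ?_
      simpa [β, toBilin'_apply'] using hx
    exact ⟨fun x h => key x (h x), fun y h => key y (h y)⟩
  have hc := (β.isCompl_orthogonal_of_restrict_nondegenerate hrefl hnd).symm
  set π := (β.orthogonal N).projection N hc
  have hsub (x : m → ℝ) : x - π x ∈ N := Submodule.sub_projection_mem hc x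
  have horth (x y : m → ℝ) : (x - π x) ⬝ᵥ (A *ᵥ π y) = 0 := by
    simpa [β, toBilin'_apply'] using
      LinearMap.BilinForm.mem_orthogonal_iff.mp (Submodule.projection_apply_mem hc y) _ (hsub x)
  set P := LinearMap.toMatrix' π
  have hP (x : m → ℝ) : P *ᵥ x = π x := LinearMap.toMatrix'_mulVec π x
  refine ⟨P, ext_iff_mulVec.mpr fun x => ?_, ?_, ext_iff_mulVec.mpr fun y => ?_, fun x hx => ?_⟩
  · rw [← mulVec_mulVec, hP, ← sub_eq_zero, ← mulVec_sub, ← neg_sub, mulVec_neg, neg_eq_zero]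
    exact hsub x
  · rw [← LinearMap.toMatrix'_mul, (Submodule.isIdempotentElem_projection hc).eq]
  · rw [zero_mulVec, ← dotProduct_eq_zero_iff]
    intro x
    rw [← mulVec_mulVec, ← mulVec_mulVec, hP, dotProduct_comm, dotProduct_mulVec, vecMul_transpose,
      sub_mulVec, one_mulVec, hP, horth]
  · rw [hP]
    exact (Submodule.projection_apply_eq_zero_iff hc).mpr hx

lemma trace_transpose_mul_mul_le (hA : Aᵀ = A) {P : Matrix m m ℝ} (hBP : B * P = B)
    (hAP : (1 - P)ᵀ * A * P = 0) (hnonpos : ∀ x, B *ᵥ x = 0 → x ⬝ᵥ (A *ᵥ x) ≤ 0)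
    (X : Matrix m n ℝ) : (Xᵀ * A * X).trace ≤ ((P * X)ᵀ * A * (P * X)).trace := by
  set Q := 1 - P
  have hPA : Pᵀ * A * Q = 0 := by
    simpa [transpose_mul, hA, Matrix.mul_assoc] using congrArg transpose hAP
  have hsplit : A = Pᵀ * A * P + Qᵀ * A * Q :=
    calc A = (P + Q)ᵀ * A * (P + Q) := by simp [Q]
      _ = Pᵀ * A * P + Qᵀ * A * Q + (Qᵀ * A * P + Pᵀ * A * Q) := by
        simp only [transpose_add, Matrix.add_mul, Matrix.mul_add]
        abel
      _ = Pᵀ * A * P + Qᵀ * A * Q := by rw [hAP, hPA, add_zero, add_zero]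
  have hQ (x : m → ℝ) : x ⬝ᵥ ((Qᵀ * A * Q) *ᵥ x) ≤ 0 := by
    rw [← mulVec_mulVec, ← mulVec_mulVec, dotProduct_mulVec, vecMul_transpose]
    refine hnonpos _ ?_
    rw [mulVec_mulVec, Matrix.mul_sub, hBP, Matrix.mul_one, sub_self, zero_mulVec]
  have := trace_transpose_mul_mul_nonpos hQ X
  conv_lhs => rw [hsplit, Matrix.mul_add, Matrix.add_mul, trace_add]
  simp only [transpose_mul, Matrix.mul_assoc] at this ⊢
  linarith

lemma posDef_add_transpose_mul_self (hB : B.PosSemidef) {P : Matrix m m ℝ}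
    (hker : ∀ x, B *ᵥ x = 0 → P *ᵥ x = 0) : (B + (1 - P)ᵀ * (1 - P)).PosDef := by
  refine .of_dotProduct_mulVec_pos (isHermitian_iff_isSymm.mpr
    ((isHermitian_iff_isSymm.mp hB.isHermitian).add (isSymm_transpose_mul_self _))) fun x hx => ?_
  rw [star_trivial, add_mulVec, dotProduct_add, ← mulVec_mulVec, dotProduct_mulVec x (1 - P)ᵀ,
    vecMul_transpose]
  have hBx : 0 ≤ x ⬝ᵥ (B *ᵥ x) := by simpa using hB.dotProduct_mulVec_nonneg x
  have hQx : 0 ≤ ((1 - P) *ᵥ x) ⬝ᵥ ((1 - P) *ᵥ x) := by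
    simpa using dotProduct_star_self_nonneg ((1 - P) *ᵥ x)
  by_contra! hle
  have hBx0 : B *ᵥ x = 0 :=
    (hB.dotProduct_mulVec_zero_iff x).mp (by simpa using (by linarith : x ⬝ᵥ (B *ᵥ x) = 0))
  have hQx0 := dotProduct_self_eq_zero.mp (by linarith : ((1 - P) *ᵥ x) ⬝ᵥ ((1 - P) *ᵥ x) = 0)
  rw [sub_mulVec, one_mulVec, hker x hBx0, sub_zero] at hQx0
  exact hx hQx0

lemma exists_transpose_mul_mul_eq_one [DecidableEq n] (hB : B.PosSemidef)
    (hrank : Fintype.card n ≤ B.rank) :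
    ∃ X : Matrix m n ℝ, Xᵀ * B * X = 1 := by
  rw [hB.isHermitian.rank_eq_card_non_zero_eigs] at hrank
  obtain ⟨e⟩ := Function.Embedding.nonempty_of_card_le hrank
  set μ := hB.isHermitian.eigenvalues
  set b := hB.isHermitian.eigenvectorBasis
  have hBb (k : m) : B *ᵥ (b k).ofLp = μ k • (b k).ofLp := hB.isHermitian.mulVec_eigenvectorBasis k
  have hμ (j : n) : 0 < μ (e j) := (hB.eigenvalues_nonneg _).lt_of_ne (e j).2.symm
  refine ⟨(of fun j => (√(μ (e j)))⁻¹ • (b (e j)).ofLp)ᵀ, ?_⟩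
  ext i j
  have hb := orthonormal_iff_ite.mp b.orthonormal (e j) (e i)
  rw [EuclideanSpace.inner_eq_star_dotProduct, star_trivial] at hb
  rw [transpose_mul_mul_apply, of_col, mulVec_smul, hBb, smul_dotProduct, dotProduct_smul,
    dotProduct_smul, hb]
  by_cases hij : i = j
  · subst hij
    have := hμ i
    simp only [if_true, one_apply_eq, smul_eq_mul]
    field_simp
    rw [Real.sq_sqrt this.le]
  · have hne : (e j : m) ≠ e i := Subtype.coe_ne_coe.mpr (e.injective.ne (Ne.symm hij))
    simp [hne, one_apply_ne hij]

theorem exists_forall_trace_le_of_negDef [DecidableEq n] (hA : Aᵀ = A) (hB : B.PosSemidef)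
    (hneg : ∀ v, B *ᵥ v = 0 → v ≠ 0 → v ⬝ᵥ (A *ᵥ v) < 0) {X₀ : Matrix m n ℝ}
    (hX₀ : X₀ᵀ * B * X₀ = 1) :
    ∃ X : Matrix m n ℝ, Xᵀ * B * X = 1 ∧
      ∀ X' : Matrix m n ℝ, X'ᵀ * B * X' = 1 → (X'ᵀ * A * X').trace ≤ (Xᵀ * A * X).trace := by
  obtain ⟨P, hBP, hPP, hAP, hker⟩ := exists_projection_of_negDef hA hneg
  have hnonpos (x : m → ℝ) (hx : B *ᵥ x = 0) : x ⬝ᵥ (A *ᵥ x) ≤ 0 := by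
    rcases eq_or_ne x 0 with rfl | hx0
    · simp
    · exact (hneg x hx hx0).le
  set K := {Y : Matrix m n ℝ | Yᵀ * B * Y = 1 ∧ P * Y = Y}
  have hPK (X : Matrix m n ℝ) (hX : Xᵀ * B * X = 1) : P * X ∈ K :=
    ⟨(transpose_mul_mul_of_mul_eq hB.isHermitian hBP X).trans hX, by rw [← Matrix.mul_assoc, hPP]⟩
  have hK : IsCompact K := by
    refine (isCompact_setOf_transpose_mul_mul_eq_one (posDef_add_transpose_mul_self hB hker))
      |>.of_isClosed_subset ((isClosed_eq (by fun_prop) continuous_const).inter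
        (isClosed_eq (by fun_prop) continuous_id)) fun Y ⟨hY, hPY⟩ => ?_
    have hQY : (1 - P) * Y = 0 := by rw [Matrix.sub_mul, Matrix.one_mul, hPY, sub_self]
    change Yᵀ * (B + (1 - P)ᵀ * (1 - P)) * Y = 1
    rw [Matrix.mul_add, Matrix.add_mul, hY, Matrix.mul_assoc Yᵀ, Matrix.mul_assoc, hQY,
      Matrix.mul_zero, Matrix.mul_zero, add_zero]
  obtain ⟨Y, hYK, hYmax⟩ := hK.exists_isMaxOn ⟨_, hPK X₀ hX₀⟩
    (by fun_prop : Continuous fun Y : Matrix m n ℝ => (Yᵀ * A * Y).trace).continuousOn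
  exact ⟨Y, hYK.1, fun X hX =>
    (trace_transpose_mul_mul_le hA hBP hAP hnonpos X).trans (hYmax (hPK X hX))⟩

end Matrix

theorem gev_minimizer_exists_iff_general
    (d r : ℕ) (hr : 1 ≤ r)
    (A B : Matrix (Fin d) (Fin d) ℝ) (hA : Aᵀ = A) (hAinv : IsUnit A.det)
    (hB : B.PosSemidef) (hrank : r ≤ B.rank) :
    (∃ X : Matrix (Fin d) (Fin r) ℝ, Xᵀ * B * X = 1 ∧
        ∀ X' : Matrix (Fin d) (Fin r) ℝ, X'ᵀ * B * X' = 1 →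
          -(Xᵀ * A * X).trace ≤ -(X'ᵀ * A * X').trace) ↔
      ∀ v : Fin d → ℝ, B *ᵥ v = 0 →
        (v ⬝ᵥ (A *ᵥ v) < 0 ∨
          (v ⬝ᵥ (A *ᵥ v) = 0 ∧ ∀ w : Fin d → ℝ, (B *ᵥ w) ⬝ᵥ (A *ᵥ v) = 0)) := by
  have : Nonempty (Fin r) := ⟨⟨0, hr⟩⟩
  constructor
  · rintro ⟨X₀, hX₀, hmin⟩ v hv
    have hbdd (X) (hX : Xᵀ * B * X = 1) := neg_le_neg_iff.mp (hmin X hX)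
    rcases (dotProduct_mulVec_nonpos_of_forall_trace_le hA hB.isHermitian hbdd hX₀ hv).lt_or_eq
      with hq | hq
    · exact .inl hq
    · refine .inr ⟨hq, fun w => ?_⟩
      rw [mulVec_eq_zero_of_forall_trace_le hA hB hbdd hX₀ hv hq, dotProduct_zero]
  · intro hcond
    have hnonpos (v) (hv : B *ᵥ v = 0) : v ⬝ᵥ (A *ᵥ v) ≤ 0 :=
      (hcond v hv).elim le_of_lt fun h => h.1.le
    have hneg (v) (hv : B *ᵥ v = 0) (hv0 : v ≠ 0) : v ⬝ᵥ (A *ᵥ v) < 0 :=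
      (hcond v hv).resolve_right fun ⟨hq, hw⟩ => hv0 <| eq_zero_of_mulVec_eq_zero hAinv.ne_zero <|
        mulVec_eq_zero_of_isotropic hA hB.isHermitian hnonpos hv hq hw
    obtain ⟨X₀, hX₀⟩ := exists_transpose_mul_mul_eq_one (n := Fin r) hB (by simpa using hrank)
    obtain ⟨X, hX, hmax⟩ := exists_forall_trace_le_of_negDef hA hB hneg hX₀
    exact ⟨X, hX, fun X' hX' => neg_le_neg (hmax X' hX')⟩

/-- **Proposition A.1.** Let `A` be symmetric and invertible and `B`
symmetric positive semidefinite with `rank B ≥ r` (so `T_B ≠ ∅`).  The problem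
`min_{X ∈ T_B} −tr(Xᵀ A X)` admits a minimizer if and only if every `v ∈ Null(B)`
satisfies either `vᵀ A v < 0`, or (`vᵀ A v = 0` and `uᵀ A v = 0` for every
`u ∈ Col(B)`). -/
theorem gev_minimizer_exists_iff
    (d r : ℕ) (hd : 1 ≤ d) (hr : 1 ≤ r) (hrd : r ≤ d)
    (A B : Matrix (Fin d) (Fin d) ℝ) (hA : Aᵀ = A) (hAinv : IsUnit A.det)
    (hB : B.PosSemidef) (hrank : r ≤ B.rank) :
    (∃ X : Matrix (Fin d) (Fin r) ℝ, Xᵀ * B * X = 1 ∧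
        ∀ X' : Matrix (Fin d) (Fin r) ℝ, X'ᵀ * B * X' = 1 →
          -(Xᵀ * A * X).trace ≤ -(X'ᵀ * A * X').trace) ↔
      ∀ v : Fin d → ℝ, B *ᵥ v = 0 →
        (v ⬝ᵥ (A *ᵥ v) < 0 ∨
          (v ⬝ᵥ (A *ᵥ v) = 0 ∧ ∀ w : Fin d → ℝ, (B *ᵥ w) ⬝ᵥ (A *ᵥ v) = 0)) :=
  gev_minimizer_exists_iff_general d r hr A B hA hAinv hB hrank
end

section
/- Under the singular-B setup below, a matrix X ∈ ℝ^{d×r} satisfies A X = B X (Xᵀ A X) and Xᵀ B X = I_r if and only if, writing (O^B)ᵀ X = [x₁; x₂] with x₁ ∈ ℝ^{m×r} and x₂ ∈ ℝ^{(d−m)×r}, one has x₂ = −W₂₂^{-1} W₂₁ x₁ and the matrix V₁ = Λ₁₁^{1/2} x₁ satisfies V₁ᵀ V₁ = I_r and Â V₁ = V₁ (V₁ᵀ Â V₁). -/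
/-!
Rotating by the orthogonal `O^B` turns the problem into one about `W` and `diag(Λ₁₁, 0)`, acting
on `(O^B)ᵀ X = [x₁; x₂]`. The lower block row of `W Y = diag(Λ₁₁, 0) Y C` has a zero right-hand
side, so it says exactly `x₂ = −W₂₂⁻¹ W₂₁ x₁`; substituting this into the upper row and into
`C = Yᵀ W Y` replaces `W` by its Schur complement `S`. Finally the change of variables
`V₁ = Λ₁₁^{1/2} x₁` turns `S x₁ = Λ₁₁ x₁ (x₁ᵀ S x₁)` into the equation for `Â`.
-/

open Matrix

namespace Matrix

variable {R : Type*} [CommRing R] {m n p : Type*}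

section Orthogonal

variable [Fintype n] [DecidableEq n] {O : Matrix n n R} (hO : Oᵀ * O = 1)
  (A B : Matrix n n R) (X : Matrix n p R)
include hO

theorem quadForm_eq_quadForm_of_orthogonal :
    Xᵀ * B * X = (Oᵀ * X)ᵀ * (Oᵀ * B * O) * (Oᵀ * X) := by
  have hO' : O * Oᵀ = 1 := mul_eq_one_comm.mp hO
  simp only [transpose_mul, transpose_transpose, Matrix.mul_assoc]
  rw [← Matrix.mul_assoc O Oᵀ, hO', Matrix.one_mul, ← Matrix.mul_assoc O Oᵀ, hO',
    Matrix.one_mul]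

theorem mul_eq_mul_mul_quadForm_iff_of_orthogonal [Fintype p] :
    A * X = B * X * (Xᵀ * A * X) ↔
      (Oᵀ * A * O) * (Oᵀ * X) =
        (Oᵀ * B * O) * (Oᵀ * X) * ((Oᵀ * X)ᵀ * (Oᵀ * A * O) * (Oᵀ * X)) := by
  have hO' : O * Oᵀ = 1 := mul_eq_one_comm.mp hO
  have hcancel : ∀ M : Matrix n n R, Oᵀ * M * O * (Oᵀ * X) = Oᵀ * (M * X) := fun M => by
    rw [Matrix.mul_assoc, ← Matrix.mul_assoc O, hO', Matrix.one_mul, Matrix.mul_assoc]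
  rw [← quadForm_eq_quadForm_of_orthogonal hO, hcancel, hcancel, Matrix.mul_assoc Oᵀ]
  exact ⟨fun h => by rw [h], fun h => by
    simpa only [← Matrix.mul_assoc, hO', Matrix.one_mul] using congrArg (O * ·) h⟩

end Orthogonal

section Schur

variable [Fintype m] [Fintype n] [DecidableEq n]
  {W₁₁ : Matrix m m R} {W₁₂ : Matrix m n R} {W₂₁ : Matrix n m R} {W₂₂ : Matrix n n R}
  (hW₂₂ : IsUnit W₂₂.det) (x₁ : Matrix m p R) (x₂ : Matrix n p R)
include hW₂₂

theorem add_mul_eq_zero_iff_eq_neg_inv_mul :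
    W₂₁ * x₁ + W₂₂ * x₂ = 0 ↔ x₂ = -(W₂₂⁻¹ * W₂₁ * x₁) := by
  constructor
  · intro h
    calc x₂ = W₂₂⁻¹ * (W₂₂ * x₂) := by
          rw [← Matrix.mul_assoc, nonsing_inv_mul _ hW₂₂, Matrix.one_mul]
      _ = -(W₂₂⁻¹ * W₂₁ * x₁) := by
          rw [eq_neg_of_add_eq_zero_right h, Matrix.mul_neg, Matrix.mul_assoc]
  · rintro rfl
    rw [Matrix.mul_neg, ← Matrix.mul_assoc, ← Matrix.mul_assoc, mul_nonsing_inv _ hW₂₂,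
      Matrix.one_mul, add_neg_cancel]

theorem fromBlocks_mul_fromRows_eq_iff_schur [Fintype p] (D : Matrix m m R) :
    fromBlocks W₁₁ W₁₂ W₂₁ W₂₂ * fromRows x₁ x₂ =
        fromBlocks D (0 : Matrix m n R) 0 0 * fromRows x₁ x₂ *
          ((fromRows x₁ x₂)ᵀ * fromBlocks W₁₁ W₁₂ W₂₁ W₂₂ * fromRows x₁ x₂) ↔
      x₂ = -(W₂₂⁻¹ * W₂₁ * x₁) ∧
        (W₁₁ - W₁₂ * W₂₂⁻¹ * W₂₁) * x₁ =
          D * x₁ * (x₁ᵀ * (W₁₁ - W₁₂ * W₂₂⁻¹ * W₂₁) * x₁) := by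
  rw [Matrix.mul_assoc (fromRows x₁ x₂)ᵀ, fromBlocks_mul_fromRows, fromBlocks_mul_fromRows,
    transpose_fromRows, fromCols_mul_fromRows, fromRows_mul, fromRows_ext_iff,
    ← add_mul_eq_zero_iff_eq_neg_inv_mul hW₂₂]
  simp only [Matrix.zero_mul, add_zero]
  rw [and_comm]
  refine and_congr_right fun h => ?_
  have hupper : W₁₁ * x₁ + W₁₂ * x₂ = (W₁₁ - W₁₂ * W₂₂⁻¹ * W₂₁) * x₁ := by
    rw [(add_mul_eq_zero_iff_eq_neg_inv_mul hW₂₂ x₁ x₂).mp h, Matrix.sub_mul,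
      Matrix.mul_neg, sub_eq_add_neg, Matrix.mul_assoc W₁₂, Matrix.mul_assoc W₁₂]
  rw [h, Matrix.mul_zero, add_zero, hupper, Matrix.mul_assoc x₁ᵀ]

end Schur

theorem quadForm_fromBlocks_zero [Fintype m] [Fintype n] (D : Matrix m m R)
    (x₁ : Matrix m p R) (x₂ : Matrix n p R) :
    (fromRows x₁ x₂)ᵀ * fromBlocks D 0 0 (0 : Matrix n n R) * fromRows x₁ x₂ = x₁ᵀ * D * x₁ := by
  rw [transpose_fromRows, fromCols_mul_fromBlocks, fromCols_mul_fromRows]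
  simp

theorem mul_eq_sq_mul_quadForm_iff_congr [Fintype m] [Fintype p] [DecidableEq m]
    {P Q : Matrix m m R} (hQP : Q * P = 1) (hP : Pᵀ = P) (S : Matrix m m R) (x : Matrix m p R) :
    S * x = P * P * x * (xᵀ * S * x) ↔
      Q * S * Q * (P * x) = P * x * ((P * x)ᵀ * (Q * S * Q) * (P * x)) := by
  have hPQ : P * Q = 1 := mul_eq_one_comm.mp hQP
  have hquad : (P * x)ᵀ * (Q * S * Q) * (P * x) = xᵀ * S * x := by
    simp only [transpose_mul, hP, Matrix.mul_assoc]
    rw [← Matrix.mul_assoc Q P x, hQP, Matrix.one_mul, ← Matrix.mul_assoc P Q, hPQ,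
      Matrix.one_mul]
  rw [hquad, Matrix.mul_assoc (Q * S) Q, ← Matrix.mul_assoc Q P, hQP, Matrix.one_mul,
    Matrix.mul_assoc Q S x]
  constructor
  · intro h
    rw [h, ← Matrix.mul_assoc Q, ← Matrix.mul_assoc Q, ← Matrix.mul_assoc Q, hQP,
      Matrix.one_mul]
  · intro h
    rw [← Matrix.one_mul (S * x), ← hPQ, Matrix.mul_assoc, h]
    simp only [Matrix.mul_assoc]

end Matrix

theorem gev_singular_equilibrium_reduction_general
    (d r m : ℕ)
    (A B : Matrix (Fin m ⊕ Fin (d - m)) (Fin m ⊕ Fin (d - m)) ℝ)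
    (OB : Matrix (Fin m ⊕ Fin (d - m)) (Fin m ⊕ Fin (d - m)) ℝ)
    (hOB : OBᵀ * OB = 1)
    (μ : Fin m → ℝ) (hμ : ∀ i, 0 < μ i)
    (hBdec : B = OB * Matrix.fromBlocks (diagonal μ) 0 0 0 * OBᵀ)
    (W : Matrix (Fin m ⊕ Fin (d - m)) (Fin m ⊕ Fin (d - m)) ℝ)
    (hW : W = OBᵀ * A * OB)
    (hW22 : IsUnit W.toBlocks₂₂.det)
    (Ahat : Matrix (Fin m) (Fin m) ℝ)
    (hAhat : Ahat = diagonal (fun i => (Real.sqrt (μ i))⁻¹) *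
        (W.toBlocks₁₁ - W.toBlocks₁₂ * W.toBlocks₂₂⁻¹ * W.toBlocks₂₁) *
        diagonal (fun i => (Real.sqrt (μ i))⁻¹))
    (X : Matrix (Fin m ⊕ Fin (d - m)) (Fin r) ℝ)
    (x₁ : Matrix (Fin m) (Fin r) ℝ) (hx₁ : x₁ = (OBᵀ * X).toRows₁)
    (x₂ : Matrix (Fin (d - m)) (Fin r) ℝ) (hx₂ : x₂ = (OBᵀ * X).toRows₂)
    (V₁ : Matrix (Fin m) (Fin r) ℝ)
    (hV₁ : V₁ = diagonal (fun i => Real.sqrt (μ i)) * x₁) :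
    (A * X = B * X * (Xᵀ * A * X) ∧ Xᵀ * B * X = 1) ↔
      (x₂ = -(W.toBlocks₂₂⁻¹ * W.toBlocks₂₁ * x₁) ∧
        V₁ᵀ * V₁ = 1 ∧ Ahat * V₁ = V₁ * (V₁ᵀ * Ahat * V₁)) := by
  set P := diagonal fun i => Real.sqrt (μ i)
  have hQP : diagonal (fun i => (Real.sqrt (μ i))⁻¹) * P = 1 := by
    simp [P, diagonal_mul_diagonal, inv_mul_cancel₀ (Real.sqrt_pos.mpr (hμ _)).ne']
  have hPP : diagonal μ = P * P := by
    simp [P, diagonal_mul_diagonal, Real.mul_self_sqrt (hμ _).le]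
  have hBrot : OBᵀ * B * OB = fromBlocks (P * P) 0 0 0 := by
    rw [hBdec, ← hPP, Matrix.mul_assoc, Matrix.mul_assoc, hOB, Matrix.mul_one,
      ← Matrix.mul_assoc, hOB, Matrix.one_mul]
  have hY : OBᵀ * X = fromRows x₁ x₂ := by rw [hx₁, hx₂, fromRows_toRows]
  have hVV : V₁ᵀ * V₁ = x₁ᵀ * (P * P) * x₁ := by
    simp only [hV₁, transpose_mul, P, diagonal_transpose, Matrix.mul_assoc]
  -- `← fromBlocks_toBlocks W` also rewrites the `W` in `W.toBlocks₂₂` on the right-hand side.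
  rw [mul_eq_mul_mul_quadForm_iff_of_orthogonal hOB,
    quadForm_eq_quadForm_of_orthogonal hOB B X, ← hW, hBrot, hY, ← fromBlocks_toBlocks W,
    toBlocks_fromBlocks₂₁, toBlocks_fromBlocks₂₂,
    fromBlocks_mul_fromRows_eq_iff_schur hW22, quadForm_fromBlocks_zero,
    mul_eq_sq_mul_quadForm_iff_congr hQP (diagonal_transpose _), hVV, hAhat, hV₁]
  tauto

/-- Singular-`B` setup: `B = O^B diag(Λ₁₁, 0) (O^B)ᵀ` with `Λ₁₁`
positive diagonal of size `m`, `W = (O^B)ᵀ A O^B` with invertible block `W₂₂`, and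
`Â = Λ₁₁^{-1/2}(W₁₁ − W₁₂ W₂₂⁻¹ W₂₁)Λ₁₁^{-1/2}`.  A matrix `X` satisfies
`A X = B X (Xᵀ A X)` and `Xᵀ B X = I_r` if and only if, writing `(O^B)ᵀ X = [x₁; x₂]`,
one has `x₂ = −W₂₂⁻¹ W₂₁ x₁` and `V₁ = Λ₁₁^{1/2} x₁` satisfies `V₁ᵀ V₁ = I_r` and
`Â V₁ = V₁ (V₁ᵀ Â V₁)`.  The ambient index set `{1,…,d}` is encoded as
`Fin m ⊕ Fin (d − m)`. -/
theorem gev_singular_equilibrium_reduction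
    (d r m : ℕ) (hd : 1 ≤ d) (hr : 1 ≤ r) (hrm : r ≤ m) (hmd : m < d)
    (A B : Matrix (Fin m ⊕ Fin (d - m)) (Fin m ⊕ Fin (d - m)) ℝ)
    (hA : Aᵀ = A) (hAinv : IsUnit A.det) (hB : B.PosSemidef)
    (OB : Matrix (Fin m ⊕ Fin (d - m)) (Fin m ⊕ Fin (d - m)) ℝ)
    (hOB : OBᵀ * OB = 1)
    (μ : Fin m → ℝ) (hμ : ∀ i, 0 < μ i)
    (hBdec : B = OB * Matrix.fromBlocks (diagonal μ) 0 0 0 * OBᵀ)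
    (W : Matrix (Fin m ⊕ Fin (d - m)) (Fin m ⊕ Fin (d - m)) ℝ)
    (hW : W = OBᵀ * A * OB)
    (hW22 : IsUnit W.toBlocks₂₂.det)
    (Ahat : Matrix (Fin m) (Fin m) ℝ)
    (hAhat : Ahat = diagonal (fun i => (Real.sqrt (μ i))⁻¹) *
        (W.toBlocks₁₁ - W.toBlocks₁₂ * W.toBlocks₂₂⁻¹ * W.toBlocks₂₁) *
        diagonal (fun i => (Real.sqrt (μ i))⁻¹))
    (X : Matrix (Fin m ⊕ Fin (d - m)) (Fin r) ℝ)
    (x₁ : Matrix (Fin m) (Fin r) ℝ) (hx₁ : x₁ = (OBᵀ * X).toRows₁)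
    (x₂ : Matrix (Fin (d - m)) (Fin r) ℝ) (hx₂ : x₂ = (OBᵀ * X).toRows₂)
    (V₁ : Matrix (Fin m) (Fin r) ℝ)
    (hV₁ : V₁ = diagonal (fun i => Real.sqrt (μ i)) * x₁) :
    (A * X = B * X * (Xᵀ * A * X) ∧ Xᵀ * B * X = 1) ↔
      (x₂ = -(W.toBlocks₂₂⁻¹ * W.toBlocks₂₁ * x₁) ∧
        V₁ᵀ * V₁ = 1 ∧ Ahat * V₁ = V₁ * (V₁ᵀ * Ahat * V₁)) :=
  gev_singular_equilibrium_reduction_general d r m A B OB hOB μ hμ hBdec W hW hW22 Ahat hAhat X x₁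
    hx₁ x₂ hx₂ V₁ hV₁
end

section
/- Under the singular-B setup below, assume in addition that the eigenvalues of Â are pairwise distinct and fix an eigendecomposition Â = O^Â Λ^Â (O^Â)ᵀ with O^Â ∈ ℝ^{m×m} orthogonal. Then (X, Xᵀ A X) is an equilibrium of the GEV Lagrangian (i.e. A X = B X (Xᵀ A X) and Xᵀ B X = I_r) if and only if there exist an r-element index set I ⊆ {1,…,m} and an orthogonal matrix Ψ ∈ ℝ^{r×r} such that X = O^B · [Λ₁₁^{-1/2} O^Â_{:,I} ; −W₂₂^{-1} W₂₁ Λ₁₁^{-1/2} O^Â_{:,I}] · Ψ, where the bracket denotes the d×r matrix with top block in ℝ^{m×r} and bottom block in ℝ^{(d−m)×r}. -/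
/-!
Conjugating by `O^B` turns `B` into `diag(Λ₁₁, 0)`. The lower block row of the equilibrium
equation then reads `W₂₁ Y₁ + W₂₂ Y₂ = 0`, which pins the bottom block `Y₂ = -W₂₂⁻¹ W₂₁ Y₁` of
`(O^B)ᵀ X`, and what remains is the equilibrium problem for the Schur complement of `W₂₂` against
`Λ₁₁`. Substituting `Y₁ = Λ₁₁^{-1/2} Z` turns it into the symmetric eigenproblem
`Â Z = Z (Zᵀ Â Z)`, `Zᵀ Z = I`. Diagonalizing the symmetric matrix `Zᵀ Â Z = U D Uᵀ`, the columns
of `Z U` are orthonormal eigenvectors of `Â`; as the eigenvalues of `Â` are simple, each of them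
is `±` a column of `O^Â`, which gives `Z = O^Â_{:,I} Ψ` with `Ψ = diag(±1) Uᵀ`.
-/

open Matrix

namespace Matrix

variable {n k : Type*} [Fintype n] [DecidableEq n] [DecidableEq k]

theorem transpose_submatrix_mul_submatrix_of_orthogonal {R : Type*} [Semiring R]
    {O : Matrix n n R} (hO : Oᵀ * O = 1) {e : k → n} (he : Function.Injective e) :
    (O.submatrix id e)ᵀ * O.submatrix id e = 1 := by
  rw [transpose_submatrix, ← submatrix_mul _ _ _ _ _ Function.bijective_id, hO, submatrix_one _ he]

variable [Fintype k]

theorem conj_diagonal_mul_submatrix_of_orthogonal {R : Type*} [CommSemiring R]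
    {O : Matrix n n R} (hO : Oᵀ * O = 1) (ν : n → R) (e : k → n) :
    O * diagonal ν * Oᵀ * O.submatrix id e = O.submatrix id e * diagonal (ν ∘ e) :=
  calc O * diagonal ν * Oᵀ * O.submatrix id e
      = (O * diagonal ν * Oᵀ * O).submatrix id e := by
        rw [submatrix_mul _ _ _ _ _ Function.bijective_id, submatrix_id_id]
    _ = (O * diagonal ν).submatrix id e := by rw [Matrix.mul_assoc _ Oᵀ, hO, Matrix.mul_one]
    _ = O.submatrix id e * diagonal (ν ∘ e) := by ext; simp [mul_diagonal]

theorem eq_of_diagonal_mul_eq_mul_diagonal {R : Type*} [CommRing R] [IsDomain R]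
    {ν : n → R} {ev : k → R} {V : Matrix n k R} (h : diagonal ν * V = V * diagonal ev)
    {i : n} {j : k} (hij : V i j ≠ 0) : ν i = ev j := by
  have hij' := congrFun₂ h i j
  rw [diagonal_mul, mul_diagonal, mul_comm] at hij'
  exact mul_left_cancel₀ hij hij'

theorem exists_embedding_of_diagonal_mul_eq_mul_diagonal {R : Type*} [CommRing R] [IsDomain R]
    {ν : n → R} (hν : Function.Injective ν) {ev : k → R} {V : Matrix n k R}
    (hV : Vᵀ * V = 1) (h : diagonal ν * V = V * diagonal ev) :
    ∃ (f : k ↪ n) (s : k → R), (∀ j, s j * s j = 1) ∧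
      V = (1 : Matrix n n R).submatrix id f * diagonal s := by
  have hsupp : ∀ {i i' j}, V i j ≠ 0 → V i' j ≠ 0 → i = i' := fun hi hi' =>
    hν ((eq_of_diagonal_mul_eq_mul_diagonal h hi).trans
      (eq_of_diagonal_mul_eq_mul_diagonal h hi').symm)
  have hgram : ∀ j j', ∑ i, V i j * V i j' = (1 : Matrix k k R) j j' := fun j j' => by
    simpa [mul_apply] using congrFun₂ hV j j'
  have hnz : ∀ j, ∃ i, V i j ≠ 0 := fun j => by
    by_contra! h0
    simpa [h0] using hgram j j
  choose f hf using hnz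
  have hcol : ∀ j j', ∑ i, V i j * V i j' = V (f j) j * V (f j) j' := fun j j' =>
    Finset.sum_eq_single _ (fun i _ hi => by
      rw [not_ne_iff.mp (mt (hsupp (hf j)) (Ne.symm hi)), zero_mul]) (by simp)
  have hf_inj : Function.Injective f := fun j j' hjj' => by
    by_contra hne
    have h0 := hgram j j'
    rw [hcol, one_apply_ne hne] at h0
    exact mul_ne_zero (hf j) (hjj' ▸ hf j') h0
  refine ⟨⟨f, hf_inj⟩, fun j => V (f j) j, fun j => by simpa [hcol] using hgram j j, ?_⟩
  ext i j
  rw [mul_diagonal, submatrix_apply, id_eq, Function.Embedding.coeFn_mk]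
  by_cases hi : i = f j
  · rw [hi, one_apply_eq, one_mul]
  · rw [one_apply_ne hi, zero_mul, not_ne_iff.mp (mt (hsupp (hf j)) (Ne.symm hi))]

theorem exists_orthogonal_diagonalization {S : Matrix k k ℝ} (hS : Sᵀ = S) :
    ∃ (U : Matrix k k ℝ) (ev : k → ℝ), Uᵀ * U = 1 ∧ S = U * diagonal ev * Uᵀ := by
  have hSh : S.IsHermitian := by rwa [IsHermitian, conjTranspose_eq_transpose_of_trivial]
  have hstar : star (hSh.eigenvectorUnitary : Matrix k k ℝ) =
      (hSh.eigenvectorUnitary : Matrix k k ℝ)ᵀ := by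
    rw [star_eq_conjTranspose, conjTranspose_eq_transpose_of_trivial]
  refine ⟨hSh.eigenvectorUnitary, hSh.eigenvalues, ?_, ?_⟩
  · rw [← hstar]
    exact Unitary.coe_star_mul_self _
  · have h := hSh.spectral_theorem
    rwa [Unitary.conjStarAlgAut_apply, hstar,
      show RCLike.ofReal ∘ hSh.eigenvalues = hSh.eigenvalues from rfl] at h

def IsGEVEquilibrium (A B : Matrix n n ℝ) (X : Matrix n k ℝ) : Prop :=
  A * X = B * X * (Xᵀ * A * X) ∧ Xᵀ * B * X = 1

theorem isGEVEquilibrium_conj_iff {P : Matrix n n ℝ} (hP : IsUnit P.det)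
    (A B : Matrix n n ℝ) (Y : Matrix n k ℝ) :
    IsGEVEquilibrium (Pᵀ * A * P) (Pᵀ * B * P) Y ↔ IsGEVEquilibrium A B (P * Y) := by
  have hPt : IsUnit Pᵀ.det := by rwa [det_transpose]
  simp only [IsGEVEquilibrium, transpose_mul, Matrix.mul_assoc]
  rw [(mul_right_injective_of_inv _ _ (nonsing_inv_mul _ hPt)).eq_iff]

theorem isGEVEquilibrium_iff_exists_mul {P : Matrix n n ℝ} (hP : IsUnit P.det)
    (A B : Matrix n n ℝ) (X : Matrix n k ℝ) :
    IsGEVEquilibrium A B X ↔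
      ∃ Y, IsGEVEquilibrium (Pᵀ * A * P) (Pᵀ * B * P) Y ∧ X = P * Y := by
  constructor
  · intro h
    exact ⟨P⁻¹ * X, by rwa [isGEVEquilibrium_conj_iff hP, mul_nonsing_inv_cancel_left _ _ hP],
      (mul_nonsing_inv_cancel_left _ _ hP).symm⟩
  · rintro ⟨Y, hY, rfl⟩
    exact (isGEVEquilibrium_conj_iff hP A B Y).mp hY

theorem isGEVEquilibrium_diagonal_iff {μ : n → ℝ} (hμ : ∀ i, 0 < μ i) (C : Matrix n n ℝ)
    (Y : Matrix n k ℝ) :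
    IsGEVEquilibrium C (diagonal μ) Y ↔
      ∃ Z, IsGEVEquilibrium (diagonal (fun i => (√(μ i))⁻¹) * C *
        diagonal (fun i => (√(μ i))⁻¹)) 1 Z ∧ Y = diagonal (fun i => (√(μ i))⁻¹) * Z := by
  have hsqrt : ∀ i, √(μ i) ≠ 0 := fun i => (Real.sqrt_pos.2 (hμ i)).ne'
  have hdet : IsUnit (diagonal fun i => (√(μ i))⁻¹).det := by
    rw [det_diagonal, isUnit_iff_ne_zero, Finset.prod_ne_zero_iff]
    exact fun i _ => inv_ne_zero (hsqrt i)
  have hwhite : (diagonal fun i => (√(μ i))⁻¹) * diagonal μ *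
      diagonal (fun i => (√(μ i))⁻¹) = 1 := by
    rw [diagonal_mul_diagonal, diagonal_mul_diagonal, ← diagonal_one]
    congr 1
    funext i
    field_simp
    rw [Real.sq_sqrt (hμ i).le, div_self (hμ i).ne']
  rw [isGEVEquilibrium_iff_exists_mul hdet, diagonal_transpose, hwhite]

theorem isGEVEquilibrium_submatrix_mul {O : Matrix n n ℝ} (hO : Oᵀ * O = 1) (ν : n → ℝ)
    (e : k ↪ n) {Ψ : Matrix k k ℝ} (hΨ : Ψᵀ * Ψ = 1) :
    IsGEVEquilibrium (O * diagonal ν * Oᵀ) 1 (O.submatrix id e * Ψ) := by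
  have hΨΨ : Ψ * Ψᵀ = 1 := mul_eq_one_comm.mp hΨ
  have hOe := transpose_submatrix_mul_submatrix_of_orthogonal hO e.injective
  have hAOe := conj_diagonal_mul_submatrix_of_orthogonal hO ν e
  have hS : (O.submatrix id e * Ψ)ᵀ * (O * diagonal ν * Oᵀ) * (O.submatrix id e * Ψ) =
      Ψᵀ * diagonal (ν ∘ e) * Ψ :=
    calc _ = Ψᵀ * ((O.submatrix id e)ᵀ * (O * diagonal ν * Oᵀ * O.submatrix id e)) * Ψ := by
          simp only [transpose_mul, Matrix.mul_assoc]
      _ = Ψᵀ * diagonal (ν ∘ e) * Ψ := by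
          rw [hAOe, ← Matrix.mul_assoc (O.submatrix id e)ᵀ, hOe, Matrix.one_mul]
  rw [IsGEVEquilibrium, Matrix.one_mul, Matrix.mul_one]
  refine ⟨?_, ?_⟩
  · rw [hS, ← Matrix.mul_assoc, hAOe]
    simp only [Matrix.mul_assoc]
    rw [← Matrix.mul_assoc Ψ, hΨΨ, Matrix.one_mul]
  · rw [transpose_mul, Matrix.mul_assoc, ← Matrix.mul_assoc (O.submatrix id e)ᵀ, hOe,
      Matrix.one_mul, hΨ]

theorem IsGEVEquilibrium.exists_eq_submatrix_mul {O : Matrix n n ℝ} (hO : Oᵀ * O = 1)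
    {ν : n → ℝ} (hν : Function.Injective ν) {X : Matrix n k ℝ}
    (hX : IsGEVEquilibrium (O * diagonal ν * Oᵀ) 1 X) :
    ∃ (e : k ↪ n) (Ψ : Matrix k k ℝ), Ψᵀ * Ψ = 1 ∧ X = O.submatrix id e * Ψ := by
  have hOO : O * Oᵀ = 1 := mul_eq_one_comm.mp hO
  obtain ⟨hAX, hXX⟩ := hX
  rw [Matrix.one_mul] at hAX
  rw [Matrix.mul_one] at hXX
  have hS : (Xᵀ * (O * diagonal ν * Oᵀ) * X)ᵀ = Xᵀ * (O * diagonal ν * Oᵀ) * X := by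
    simp only [transpose_mul, transpose_transpose, diagonal_transpose, Matrix.mul_assoc]
  obtain ⟨U, ev, hU, hSU⟩ := exists_orthogonal_diagonalization hS
  have hUU : U * Uᵀ = 1 := mul_eq_one_comm.mp hU
  have hV : (Oᵀ * X * U)ᵀ * (Oᵀ * X * U) = 1 := by
    simp only [transpose_mul, transpose_transpose, Matrix.mul_assoc]
    rw [← Matrix.mul_assoc O, hOO, Matrix.one_mul, ← Matrix.mul_assoc Xᵀ, hXX, Matrix.one_mul, hU]
  have hVev : diagonal ν * (Oᵀ * X * U) = Oᵀ * X * U * diagonal ev :=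
    calc diagonal ν * (Oᵀ * X * U) = Oᵀ * (O * diagonal ν * Oᵀ * X) * U := by
          simp only [← Matrix.mul_assoc, hO, Matrix.one_mul]
      _ = Oᵀ * X * (U * diagonal ev * Uᵀ) * U := by rw [hAX, ← hSU, ← Matrix.mul_assoc Oᵀ X]
      _ = Oᵀ * X * U * diagonal ev := by simp only [Matrix.mul_assoc, hU, Matrix.mul_one]
  obtain ⟨f, s, hs, hVf⟩ := exists_embedding_of_diagonal_mul_eq_mul_diagonal hν hV hVev
  refine ⟨f, diagonal s * Uᵀ, ?_, ?_⟩
  · rw [transpose_mul, transpose_transpose, diagonal_transpose, Matrix.mul_assoc,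
      ← Matrix.mul_assoc (diagonal s), diagonal_mul_diagonal, funext hs, diagonal_one,
      Matrix.one_mul, hUU]
  · have hOf : O * (1 : Matrix n n ℝ).submatrix id f = O.submatrix id f := by
      simpa using mul_submatrix_one (Equiv.refl n) f O
    calc X = O * (Oᵀ * X * U) * Uᵀ := by
          simp only [← Matrix.mul_assoc, hOO, Matrix.one_mul, Matrix.mul_assoc X, hUU,
            Matrix.mul_one]
      _ = O.submatrix id f * (diagonal s * Uᵀ) := by
          rw [hVf, ← Matrix.mul_assoc O, hOf, Matrix.mul_assoc]

theorem isGEVEquilibrium_one_iff {O : Matrix n n ℝ} (hO : Oᵀ * O = 1) {ν : n → ℝ}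
    (hν : Function.Injective ν) (X : Matrix n k ℝ) :
    IsGEVEquilibrium (O * diagonal ν * Oᵀ) 1 X ↔
      ∃ (e : k ↪ n) (Ψ : Matrix k k ℝ), Ψᵀ * Ψ = 1 ∧ X = O.submatrix id e * Ψ := by
  refine ⟨fun hX => hX.exists_eq_submatrix_mul hO hν, ?_⟩
  rintro ⟨e, Ψ, hΨ, rfl⟩
  exact isGEVEquilibrium_submatrix_mul hO ν e hΨ

variable {n₁ n₂ : Type*} [Fintype n₁] [Fintype n₂]

theorem fromBlocks_zero_mul_fromRows {p : Type*} (D : Matrix n₁ n₁ ℝ) (Y₁ : Matrix n₁ p ℝ)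
    (Y₂ : Matrix n₂ p ℝ) :
    (fromBlocks D 0 0 0 : Matrix (n₁ ⊕ n₂) (n₁ ⊕ n₂) ℝ) * fromRows Y₁ Y₂ =
      fromRows (D * Y₁) 0 := by
  rw [fromBlocks_mul_fromRows]
  simp only [Matrix.zero_mul, add_zero]

variable [DecidableEq n₂]

noncomputable def schurCompl₂₂ (W : Matrix (n₁ ⊕ n₂) (n₁ ⊕ n₂) ℝ) : Matrix n₁ n₁ ℝ :=
  W.toBlocks₁₁ - W.toBlocks₁₂ * W.toBlocks₂₂⁻¹ * W.toBlocks₂₁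

theorem mul_fromRows_neg_inv_mul {p : Type*} {W : Matrix (n₁ ⊕ n₂) (n₁ ⊕ n₂) ℝ}
    (hW : IsUnit W.toBlocks₂₂.det) (Y : Matrix n₁ p ℝ) :
    W * fromRows Y (-(W.toBlocks₂₂⁻¹ * W.toBlocks₂₁ * Y)) = fromRows (W.schurCompl₂₂ * Y) 0 := by
  nth_rw 1 [← fromBlocks_toBlocks W]
  rw [fromBlocks_mul_fromRows, schurCompl₂₂]
  congr 1
  · rw [Matrix.sub_mul, sub_eq_add_neg]
    simp only [Matrix.mul_neg, Matrix.mul_assoc]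
  · rw [Matrix.mul_neg, Matrix.mul_assoc, mul_nonsing_inv_cancel_left _ _ hW, add_neg_cancel]

theorem isGEVEquilibrium_fromBlocks_fromRows_iff {W : Matrix (n₁ ⊕ n₂) (n₁ ⊕ n₂) ℝ}
    (hW : IsUnit W.toBlocks₂₂.det) (D : Matrix n₁ n₁ ℝ) (Y₁ : Matrix n₁ k ℝ) :
    IsGEVEquilibrium W (fromBlocks D 0 0 0)
        (fromRows Y₁ (-(W.toBlocks₂₂⁻¹ * W.toBlocks₂₁ * Y₁))) ↔
      IsGEVEquilibrium W.schurCompl₂₂ D Y₁ := by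
  set Y := fromRows Y₁ (-(W.toBlocks₂₂⁻¹ * W.toBlocks₂₁ * Y₁))
  have hWY : W * Y = fromRows (W.schurCompl₂₂ * Y₁) 0 := mul_fromRows_neg_inv_mul hW Y₁
  have hYWY : Yᵀ * W * Y = Y₁ᵀ * W.schurCompl₂₂ * Y₁ := by
    rw [Matrix.mul_assoc, hWY, transpose_fromRows, fromCols_mul_fromRows, Matrix.mul_zero,
      add_zero, Matrix.mul_assoc]
  have hYDY : Yᵀ * (fromBlocks D 0 0 0 : Matrix (n₁ ⊕ n₂) (n₁ ⊕ n₂) ℝ) * Y = Y₁ᵀ * D * Y₁ := by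
    rw [Matrix.mul_assoc, fromBlocks_zero_mul_fromRows, transpose_fromRows, fromCols_mul_fromRows,
      Matrix.mul_zero, add_zero, Matrix.mul_assoc]
  rw [IsGEVEquilibrium, IsGEVEquilibrium, hYWY, hYDY, hWY, fromBlocks_zero_mul_fromRows,
    fromRows_mul, fromRows_ext_iff, Matrix.zero_mul]
  simp only [and_true]

theorem eq_neg_of_isGEVEquilibrium_fromBlocks {W : Matrix (n₁ ⊕ n₂) (n₁ ⊕ n₂) ℝ}
    (hW : IsUnit W.toBlocks₂₂.det) {D : Matrix n₁ n₁ ℝ} {Y₁ : Matrix n₁ k ℝ}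
    {Y₂ : Matrix n₂ k ℝ} (h : IsGEVEquilibrium W (fromBlocks D 0 0 0) (fromRows Y₁ Y₂)) :
    Y₂ = -(W.toBlocks₂₂⁻¹ * W.toBlocks₂₁ * Y₁) := by
  have hbottom : W.toBlocks₂₁ * Y₁ + W.toBlocks₂₂ * Y₂ = 0 := by
    have h₁ := h.1
    nth_rw 1 [← fromBlocks_toBlocks W] at h₁
    rw [fromBlocks_mul_fromRows, fromBlocks_zero_mul_fromRows, fromRows_mul, fromRows_ext_iff,
      Matrix.zero_mul] at h₁
    exact h₁.2
  rw [← nonsing_inv_mul_cancel_left _ Y₂ hW, eq_neg_of_add_eq_zero_right hbottom]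
  simp only [Matrix.mul_neg, Matrix.mul_assoc]

theorem isGEVEquilibrium_fromBlocks_iff {W : Matrix (n₁ ⊕ n₂) (n₁ ⊕ n₂) ℝ}
    (hW : IsUnit W.toBlocks₂₂.det) (D : Matrix n₁ n₁ ℝ) (Y : Matrix (n₁ ⊕ n₂) k ℝ) :
    IsGEVEquilibrium W (fromBlocks D 0 0 0) Y ↔
      ∃ Y₁, IsGEVEquilibrium W.schurCompl₂₂ D Y₁ ∧
        Y = fromRows Y₁ (-(W.toBlocks₂₂⁻¹ * W.toBlocks₂₁ * Y₁)) := by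
  constructor
  · intro h
    obtain ⟨Y₁, Y₂, rfl⟩ : ∃ (Y₁ : Matrix n₁ k ℝ) (Y₂ : Matrix n₂ k ℝ), Y = fromRows Y₁ Y₂ :=
      ⟨_, _, (fromRows_toRows Y).symm⟩
    obtain rfl := eq_neg_of_isGEVEquilibrium_fromBlocks hW h
    exact ⟨_, (isGEVEquilibrium_fromBlocks_fromRows_iff hW D _).1 h, rfl⟩
  · rintro ⟨Y₁, hY₁, rfl⟩
    exact (isGEVEquilibrium_fromBlocks_fromRows_iff hW D Y₁).2 hY₁

end Matrix

theorem gev_singular_equilibrium_characterization_general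
    (d r m : ℕ)
    (A B : Matrix (Fin m ⊕ Fin (d - m)) (Fin m ⊕ Fin (d - m)) ℝ)
    (OB : Matrix (Fin m ⊕ Fin (d - m)) (Fin m ⊕ Fin (d - m)) ℝ)
    (hOB : OBᵀ * OB = 1)
    (μ : Fin m → ℝ) (hμ : ∀ i, 0 < μ i)
    (hBdec : B = OB * Matrix.fromBlocks (diagonal μ) 0 0 0 * OBᵀ)
    (W : Matrix (Fin m ⊕ Fin (d - m)) (Fin m ⊕ Fin (d - m)) ℝ)
    (hW : W = OBᵀ * A * OB)
    (hW22 : IsUnit W.toBlocks₂₂.det)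
    (Ahat : Matrix (Fin m) (Fin m) ℝ)
    (hAhat : Ahat = diagonal (fun i => (Real.sqrt (μ i))⁻¹) *
        (W.toBlocks₁₁ - W.toBlocks₁₂ * W.toBlocks₂₂⁻¹ * W.toBlocks₂₁) *
        diagonal (fun i => (Real.sqrt (μ i))⁻¹))
    (Ohat : Matrix (Fin m) (Fin m) ℝ) (hOhat : Ohatᵀ * Ohat = 1)
    (ν : Fin m → ℝ) (hν : Function.Injective ν)
    (hAhatdec : Ahat = Ohat * diagonal ν * Ohatᵀ)
    (X : Matrix (Fin m ⊕ Fin (d - m)) (Fin r) ℝ) :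
    (A * X = B * X * (Xᵀ * A * X) ∧ Xᵀ * B * X = 1) ↔
      ∃ (e : Fin r ↪ Fin m) (Ψ : Matrix (Fin r) (Fin r) ℝ), Ψᵀ * Ψ = 1 ∧
        X = OB * Matrix.fromRows
            (diagonal (fun i => (Real.sqrt (μ i))⁻¹) * Ohat.submatrix id ⇑e)
            (-(W.toBlocks₂₂⁻¹ * W.toBlocks₂₁ *
                (diagonal (fun i => (Real.sqrt (μ i))⁻¹) * Ohat.submatrix id ⇑e))) * Ψ := by
  have hBW : OBᵀ * B * OB = fromBlocks (diagonal μ) 0 0 0 := by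
    rw [hBdec, ← Matrix.mul_assoc, ← Matrix.mul_assoc, hOB, Matrix.one_mul, Matrix.mul_assoc,
      hOB, Matrix.mul_one]
  have hAhat' : Ahat = diagonal (fun i => (√(μ i))⁻¹) * W.schurCompl₂₂ *
      diagonal (fun i => (√(μ i))⁻¹) := hAhat
  change IsGEVEquilibrium A B X ↔ _
  rw [isGEVEquilibrium_iff_exists_mul (isUnit_det_of_left_inverse hOB), ← hW, hBW]
  simp only [isGEVEquilibrium_fromBlocks_iff hW22, isGEVEquilibrium_diagonal_iff hμ, ← hAhat',
    hAhatdec, isGEVEquilibrium_one_iff hOhat hν]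
  simp only [Matrix.mul_assoc, fromRows_mul, Matrix.neg_mul]
  constructor
  · rintro ⟨_, ⟨_, ⟨_, ⟨e, Ψ, hΨ, rfl⟩, rfl⟩, rfl⟩, rfl⟩
    exact ⟨e, Ψ, hΨ, rfl⟩
  · rintro ⟨e, Ψ, hΨ, rfl⟩
    exact ⟨_, ⟨_, ⟨_, ⟨e, Ψ, hΨ, rfl⟩, rfl⟩, rfl⟩, rfl⟩

/-- **Theorem B.2.** Singular-`B` setup as in Statement 13, with an
eigendecomposition `Â = O^Â Λ^Â (O^Â)ᵀ` whose eigenvalues are pairwise distinct.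
Then `(X, Xᵀ A X)` is an equilibrium of the GEV Lagrangian
(`A X = B X (Xᵀ A X)` and `Xᵀ B X = I_r`) if and only if
`X = O^B [Λ₁₁^{-1/2} O^Â_{:,I}; −W₂₂⁻¹ W₂₁ Λ₁₁^{-1/2} O^Â_{:,I}] Ψ` for some
`r`-element index set `I ⊆ {1,…,m}` (encoded by an injection `e : Fin r ↪ Fin m`)
and some orthogonal `Ψ`.  The ambient index set `{1,…,d}` is encoded as
`Fin m ⊕ Fin (d − m)`. -/
theorem gev_singular_equilibrium_characterization
    (d r m : ℕ) (hd : 1 ≤ d) (hr : 1 ≤ r) (hrm : r ≤ m) (hmd : m < d)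
    (A B : Matrix (Fin m ⊕ Fin (d - m)) (Fin m ⊕ Fin (d - m)) ℝ)
    (hA : Aᵀ = A) (hAinv : IsUnit A.det) (hB : B.PosSemidef)
    (OB : Matrix (Fin m ⊕ Fin (d - m)) (Fin m ⊕ Fin (d - m)) ℝ)
    (hOB : OBᵀ * OB = 1)
    (μ : Fin m → ℝ) (hμ : ∀ i, 0 < μ i)
    (hBdec : B = OB * Matrix.fromBlocks (diagonal μ) 0 0 0 * OBᵀ)
    (W : Matrix (Fin m ⊕ Fin (d - m)) (Fin m ⊕ Fin (d - m)) ℝ)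
    (hW : W = OBᵀ * A * OB)
    (hW22 : IsUnit W.toBlocks₂₂.det)
    (Ahat : Matrix (Fin m) (Fin m) ℝ)
    (hAhat : Ahat = diagonal (fun i => (Real.sqrt (μ i))⁻¹) *
        (W.toBlocks₁₁ - W.toBlocks₁₂ * W.toBlocks₂₂⁻¹ * W.toBlocks₂₁) *
        diagonal (fun i => (Real.sqrt (μ i))⁻¹))
    (Ohat : Matrix (Fin m) (Fin m) ℝ) (hOhat : Ohatᵀ * Ohat = 1)
    (ν : Fin m → ℝ) (hν : Function.Injective ν)
    (hAhatdec : Ahat = Ohat * diagonal ν * Ohatᵀ)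
    (X : Matrix (Fin m ⊕ Fin (d - m)) (Fin r) ℝ) :
    (A * X = B * X * (Xᵀ * A * X) ∧ Xᵀ * B * X = 1) ↔
      ∃ (e : Fin r ↪ Fin m) (Ψ : Matrix (Fin r) (Fin r) ℝ), Ψᵀ * Ψ = 1 ∧
        X = OB * Matrix.fromRows
            (diagonal (fun i => (Real.sqrt (μ i))⁻¹) * Ohat.submatrix id ⇑e)
            (-(W.toBlocks₂₂⁻¹ * W.toBlocks₂₁ *
                (diagonal (fun i => (Real.sqrt (μ i))⁻¹) * Ohat.submatrix id ⇑e))) * Ψ :=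
  gev_singular_equilibrium_characterization_general d r m A B OB hOB μ hμ hBdec W hW hW22 Ahat hAhat
    Ohat hOhat ν hν hAhatdec X
end

section
/- Let O ∈ ℝ^{d×d} be orthogonal, let Λ^A, Λ^B ∈ ℝ^{d×d} be diagonal with Λ^B having strictly positive diagonal, and set A = O Λ^A Oᵀ, B = O Λ^B Oᵀ, B^{-1/2} = O (Λ^B)^{-1/2} Oᵀ, and Λ = (Λ^B)^{-1/2} Λ^A (Λ^B)^{-1/2}. Let A', B' be independent, integrable random d×d matrices with E[A'] = A and E[B'] = B, and with E‖A'‖² and E‖B'‖² finite. Fix a deterministic vector W ∈ ℝ^d and define the random matrices Λ̂ = Oᵀ B' O and Λ̃ = Oᵀ B^{-1/2} A' B^{-1/2} O. Then E[(Λ^B − (Λ^B)^{1/2} Λ̂ (Λ^B)^{-1/2} W Wᵀ) Λ̃ W] = Λ^A W − (Wᵀ Λ W) Λ^B W. -/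
/-!
The integrand is `((Y ω * Z ω) *ᵥ W) i` with `Y = Λ^B - (Λ^B)^{1/2} Λ̂ (Λ^B)^{-1/2} W Wᵀ` a
function of `B'` and `Z = Λ̃` a function of `A'`, so `Y` and `Z` are independent. Expectations
are linear, and an entry of `Y * Z` is a sum of products of independent scalars, so
`E[(Y * Z) *ᵥ W] = (E[Y] * E[Z]) *ᵥ W`. Orthogonality of `O` gives `E[Λ̂] = Λ^B` and
`E[Λ̃] = Λ`, after which only diagonal algebra remains.
-/

open Matrix MeasureTheory

instance (m n : Type*) : MeasurableSpace (Matrix m n ℝ) :=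
  inferInstanceAs (MeasurableSpace (m → n → ℝ))

instance Matrix.borelSpace (m n : Type*) [Countable m] [Countable n] :
    BorelSpace (Matrix m n ℝ) :=
  inferInstanceAs (BorelSpace (m → n → ℝ))

open ProbabilityTheory

section EntrywiseMean

variable {Ω l m n p : Type*} [MeasurableSpace Ω] {P : Measure Ω}

/-- Matrices carry no global norm, so means of random matrices are taken entrywise. -/
def HasEntrywiseMean (P : Measure Ω) (X : Ω → Matrix m n ℝ) (M : Matrix m n ℝ) : Prop :=
  ∀ i j, Integrable (fun ω => X ω i j) P ∧ ∫ ω, X ω i j ∂P = M i j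

namespace HasEntrywiseMean

variable {X : Ω → Matrix m n ℝ} {M : Matrix m n ℝ}

theorem const_mul [Fintype m] (h : HasEntrywiseMean P X M) (U : Matrix l m ℝ) :
    HasEntrywiseMean P (fun ω => U * X ω) (U * M) := by
  intro i j
  have hint k : Integrable (fun ω => U i k * X ω k j) P := (h k j).1.const_mul _
  simp only [mul_apply]
  refine ⟨integrable_finsetSum _ fun k _ => hint k, ?_⟩
  rw [integral_finsetSum _ fun k _ => hint k]
  simp only [integral_const_mul, (h _ j).2]

theorem mul_const [Fintype n] (h : HasEntrywiseMean P X M) (V : Matrix n p ℝ) :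
    HasEntrywiseMean P (fun ω => X ω * V) (M * V) := by
  intro i j
  have hint k : Integrable (fun ω => X ω i k * V k j) P := (h i k).1.mul_const _
  simp only [mul_apply]
  refine ⟨integrable_finsetSum _ fun k _ => hint k, ?_⟩
  rw [integral_finsetSum _ fun k _ => hint k]
  simp only [integral_mul_const, (h i _).2]

theorem const_sub [IsProbabilityMeasure P] (h : HasEntrywiseMean P X M) (C : Matrix m n ℝ) :
    HasEntrywiseMean P (fun ω => C - X ω) (C - M) := by
  intro i j
  refine ⟨(integrable_const _).sub (h i j).1, ?_⟩
  simp only [Matrix.sub_apply]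
  rw [integral_sub (integrable_const _) (h i j).1, integral_const, (h i j).2]
  simp

theorem mul_of_indepFun [Fintype n] {Y : Ω → Matrix n p ℝ} {N : Matrix n p ℝ}
    (hX : HasEntrywiseMean P X M) (hY : HasEntrywiseMean P Y N) (hXY : IndepFun X Y P) :
    HasEntrywiseMean P (fun ω => X ω * Y ω) (M * N) := by
  intro i j
  have hindep k : IndepFun (fun ω => X ω i k) (fun ω => Y ω k j) P :=
    hXY.comp ((measurable_pi_apply k).comp (measurable_pi_apply i))
      ((measurable_pi_apply j).comp (measurable_pi_apply k))
  have hint k : Integrable (fun ω => X ω i k * Y ω k j) P :=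
    (hindep k).integrable_mul (hX i k).1 (hY k j).1
  simp only [mul_apply]
  refine ⟨integrable_finsetSum _ fun k _ => hint k, ?_⟩
  rw [integral_finsetSum _ fun k _ => hint k]
  refine Finset.sum_congr rfl fun k _ => ?_
  rw [(hindep k).integral_fun_mul_eq_mul_integral (hX i k).1.1 (hY k j).1.1, (hX i k).2,
    (hY k j).2]

theorem integral_mulVec_apply [Fintype n] (h : HasEntrywiseMean P X M) (w : n → ℝ) (i : m) :
    ∫ ω, (X ω *ᵥ w) i ∂P = (M *ᵥ w) i := by
  have hint j : Integrable (fun ω => X ω i j * w j) P := (h i j).1.mul_const _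
  simp only [mulVec, dotProduct]
  rw [integral_finsetSum _ fun j _ => hint j]
  simp only [integral_mul_const, (h i _).2]

end HasEntrywiseMean

end EntrywiseMean

section Deterministic

variable {n : Type*} [Fintype n]

theorem sub_mul_vecMulVec_mul_mulVec {R : Type*} [CommRing R] (D N : Matrix n n R)
    (w : n → R) :
    ((D - D * vecMulVec w w) * N) *ᵥ w = (D * N) *ᵥ w - (w ⬝ᵥ (N *ᵥ w)) • (D *ᵥ w) := by
  simp only [Matrix.sub_mul, sub_mulVec, ← mulVec_mulVec, vecMulVec_mulVec, op_smul_eq_smul,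
    mulVec_smul]

variable [DecidableEq n]

theorem diagonal_sqrt_mul_mul_diagonal_inv_sqrt {l : n → ℝ} (hl : ∀ i, 0 ≤ l i) :
    diagonal (fun i => √(l i)) * diagonal l * diagonal (fun i => (√(l i))⁻¹) =
      diagonal l := by
  simp only [diagonal_mul_diagonal]
  congr 1
  funext i
  rcases (hl i).eq_or_lt with h | h
  · simp [← h]
  · field_simp [(Real.sqrt_pos.2 h).ne']

theorem diagonal_mul_inv_sqrt_mul_mul_inv_sqrt {l a : n → ℝ} (hl : ∀ i, 0 < l i) :
    diagonal l *
        (diagonal (fun i => (√(l i))⁻¹) * diagonal a * diagonal (fun i => (√(l i))⁻¹)) =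
      diagonal a := by
  simp only [diagonal_mul_diagonal]
  congr 1
  funext i
  field_simp [(Real.sqrt_pos.2 (hl i)).ne']
  rw [Real.sq_sqrt (hl i).le]

end Deterministic

theorem sgha_infinitesimal_mean_general
    (d : ℕ)
    (O : Matrix (Fin d) (Fin d) ℝ) (hO : Oᵀ * O = 1)
    (lamA lamB : Fin d → ℝ) (hlamB : ∀ i, 0 < lamB i)
    (A B Binvhalf Λm : Matrix (Fin d) (Fin d) ℝ)
    (hA : A = O * diagonal lamA * Oᵀ)
    (hB : B = O * diagonal lamB * Oᵀ)
    (hBinvhalf : Binvhalf = O * diagonal (fun i => (Real.sqrt (lamB i))⁻¹) * Oᵀ)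
    (hΛm : Λm = diagonal (fun i => (Real.sqrt (lamB i))⁻¹) * diagonal lamA *
        diagonal (fun i => (Real.sqrt (lamB i))⁻¹))
    (Ω : Type*) [MeasurableSpace Ω] (P : Measure Ω) [IsProbabilityMeasure P]
    (A' B' : Ω → Matrix (Fin d) (Fin d) ℝ)
    (hindep : ProbabilityTheory.IndepFun A' B' P)
    (hintA : ∀ i j, Integrable (fun ω => A' ω i j) P)
    (hintB : ∀ i j, Integrable (fun ω => B' ω i j) P)
    (hmeanA : ∀ i j, ∫ ω, A' ω i j ∂P = A i j)
    (hmeanB : ∀ i j, ∫ ω, B' ω i j ∂P = B i j)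
    (W : Fin d → ℝ) :
    ∀ i, (∫ ω, (((diagonal lamB -
          diagonal (fun k => Real.sqrt (lamB k)) * (Oᵀ * B' ω * O) *
            diagonal (fun k => (Real.sqrt (lamB k))⁻¹) * vecMulVec W W) *
          (Oᵀ * Binvhalf * A' ω * Binvhalf * O)) *ᵥ W) i ∂P)
      = (diagonal lamA *ᵥ W - (W ⬝ᵥ (Λm *ᵥ W)) • (diagonal lamB *ᵥ W)) i := by
  intro i
  set S := diagonal fun k => √(lamB k)
  set Si := diagonal fun k => (√(lamB k))⁻¹
  have hcancel (X : Matrix (Fin d) (Fin d) ℝ) : Oᵀ * (O * X) = X := by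
    rw [← Matrix.mul_assoc, hO, Matrix.one_mul]
  have hA' : HasEntrywiseMean P A' A := fun i j => ⟨hintA i j, hmeanA i j⟩
  have hB' : HasEntrywiseMean P B' B := fun i j => ⟨hintB i j, hmeanB i j⟩
  have hY : HasEntrywiseMean P
      (fun ω => diagonal lamB - S * (Oᵀ * B' ω * O) * Si * vecMulVec W W)
      (diagonal lamB - diagonal lamB * vecMulVec W W) := by
    have h := ((((hB'.const_mul Oᵀ |>.mul_const O).const_mul S).mul_const Si).mul_const
      (vecMulVec W W)).const_sub (diagonal lamB)
    have hOBO : Oᵀ * B * O = diagonal lamB := by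
      simp only [hB, Matrix.mul_assoc, hcancel, hO, Matrix.mul_one]
    rwa [hOBO, diagonal_sqrt_mul_mul_diagonal_inv_sqrt fun k => (hlamB k).le] at h
  have hZ : HasEntrywiseMean P (fun ω => Oᵀ * Binvhalf * A' ω * Binvhalf * O) Λm := by
    have h := ((hA'.const_mul (Oᵀ * Binvhalf)).mul_const Binvhalf).mul_const O
    have hOAO : Oᵀ * Binvhalf * A * Binvhalf * O = Λm := by
      simp only [hBinvhalf, hA, hΛm, Matrix.mul_assoc, hcancel, hO, Matrix.mul_one]
    rwa [hOAO] at h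
  have hYZ := hindep.symm.comp
    (φ := fun b => diagonal lamB - S * (Oᵀ * b * O) * Si * vecMulVec W W)
    (ψ := fun a => Oᵀ * Binvhalf * a * Binvhalf * O) (by fun_prop) (by fun_prop)
  rw [(hY.mul_of_indepFun hZ hYZ).integral_mulVec_apply, sub_mul_vecMulVec_mul_mulVec, hΛm,
    diagonal_mul_inv_sqrt_mul_mul_inv_sqrt hlamB]

/-- Infinitesimal conditional expectation of the transformed SGHA
update: for independent integrable random matrices `A'`, `B'` with means `A`, `B` and
finite second moments, and a fixed vector `W`,
`E[(Λ^B − (Λ^B)^{1/2} Λ̂ (Λ^B)^{-1/2} W Wᵀ) Λ̃ W] = Λ^A W − (Wᵀ Λ W) Λ^B W`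
(componentwise), where `Λ̂ = Oᵀ B' O`, `Λ̃ = Oᵀ B^{-1/2} A' B^{-1/2} O` and
`Λ = (Λ^B)^{-1/2} Λ^A (Λ^B)^{-1/2}`. -/
theorem sgha_infinitesimal_mean
    (d : ℕ) (hd : 1 ≤ d)
    (O : Matrix (Fin d) (Fin d) ℝ) (hO : Oᵀ * O = 1)
    (lamA lamB : Fin d → ℝ) (hlamB : ∀ i, 0 < lamB i)
    (A B Binvhalf Λm : Matrix (Fin d) (Fin d) ℝ)
    (hA : A = O * diagonal lamA * Oᵀ)
    (hB : B = O * diagonal lamB * Oᵀ)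
    (hBinvhalf : Binvhalf = O * diagonal (fun i => (Real.sqrt (lamB i))⁻¹) * Oᵀ)
    (hΛm : Λm = diagonal (fun i => (Real.sqrt (lamB i))⁻¹) * diagonal lamA *
        diagonal (fun i => (Real.sqrt (lamB i))⁻¹))
    (Ω : Type*) [MeasurableSpace Ω] (P : Measure Ω) [IsProbabilityMeasure P]
    (A' B' : Ω → Matrix (Fin d) (Fin d) ℝ)
    (hmeasA : Measurable A') (hmeasB : Measurable B')
    (hindep : ProbabilityTheory.IndepFun A' B' P)
    (hintA : ∀ i j, Integrable (fun ω => A' ω i j) P)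
    (hintB : ∀ i j, Integrable (fun ω => B' ω i j) P)
    (hmeanA : ∀ i j, ∫ ω, A' ω i j ∂P = A i j)
    (hmeanB : ∀ i j, ∫ ω, B' ω i j ∂P = B i j)
    (hmomA : Integrable (fun ω => ∑ i, ∑ j, (A' ω i j) ^ 2) P)
    (hmomB : Integrable (fun ω => ∑ i, ∑ j, (B' ω i j) ^ 2) P)
    (W : Fin d → ℝ) :
    ∀ i, (∫ ω, (((diagonal lamB -
          diagonal (fun k => Real.sqrt (lamB k)) * (Oᵀ * B' ω * O) *
            diagonal (fun k => (Real.sqrt (lamB k))⁻¹) * vecMulVec W W) *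
          (Oᵀ * Binvhalf * A' ω * Binvhalf * O)) *ᵥ W) i ∂P)
      = (diagonal lamA *ᵥ W - (W ⬝ᵥ (Λm *ᵥ W)) • (diagonal lamB *ᵥ W)) i :=
  sgha_infinitesimal_mean_general d O hO lamA lamB hlamB A B Binvhalf Λm hA hB hBinvhalf hΛm Ω P A'
    B' hindep hintA hintB hmeanA hmeanB W
end

section
/- Let d ≥ 1, let μ₁, …, μ_d > 0 and β₁, …, β_d ∈ ℝ, let T ⊆ ℝ be an open interval, and let w : T → ℝ^d be differentiable with w_i'(t) = μ_i (β_i − Σ_{l=1}^d β_l w_l(t)²) w_i(t) for all t ∈ T and all i. Fix indices j ≠ k and suppose w_j(t) > 0 and w_k(t) > 0 for all t ∈ T. Then the function v(t) = w_k(t)^{μ_j} / w_j(t)^{μ_k} satisfies the ODE v'(t) = μ_j μ_k (β_k − β_j) v(t) on T; consequently v(t) = v(t₀) exp(μ_j μ_k (β_k − β_j)(t − t₀)) for all t, t₀ ∈ T. -/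
/-!
Each `w_i` grows at the relative rate `μ_i (β_i − S)`, where `S = Σ_l β_l w_l²` is common to all
coordinates. Hence `log v = μ_j log w_k − μ_k log w_j` grows at the rate
`μ_j μ_k (β_k − S) − μ_k μ_j (β_j − S) = μ_j μ_k (β_k − β_j)`: the nonlinear term cancels and `v`
solves a linear ODE, whose solutions on an interval are exponentials.
-/

open Matrix

open Real

theorem HasDerivAt.div_of_relative_rate {𝕜 : Type*} [NontriviallyNormedField 𝕜] {f g : 𝕜 → 𝕜}
    {a b x : 𝕜} (hf : HasDerivAt f (a * f x) x)
    (hg : HasDerivAt g (b * g x) x) (hgx : g x ≠ 0) :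
    HasDerivAt (fun y => f y / g y) ((a - b) * (f x / g x)) x := by
  refine (hf.div hg hgx).congr_deriv ?_
  field_simp

theorem HasDerivAt.rpow_const_of_relative_rate {f : ℝ → ℝ} {a x : ℝ} (p : ℝ)
    (hf : HasDerivAt f (a * f x) x) (hfx : f x ≠ 0) :
    HasDerivAt (fun y => f y ^ p) (p * a * f x ^ p) x := by
  refine (hf.rpow_const (Or.inl hfx)).congr_deriv ?_
  calc a * f x * p * f x ^ (p - 1) = p * a * (f x ^ (p - 1) * f x) := by ring
    _ = p * a * f x ^ p := by rw [← rpow_add_one hfx, sub_add_cancel]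

theorem Convex.eq_of_forall_hasDerivAt_zero {E : Type*} [NormedAddCommGroup E] [NormedSpace ℝ E]
    {f : ℝ → E} {s : Set ℝ} (hs : Convex ℝ s) (hf : ∀ x ∈ s, HasDerivAt f 0 x) {x y : ℝ}
    (hx : x ∈ s) (hy : y ∈ s) : f x = f y := by
  have h := hs.norm_image_sub_le_of_norm_hasDerivWithin_le
    (fun z hz => (hf z hz).hasDerivWithinAt) (fun _ _ => norm_zero.le) hy hx
  rwa [zero_mul, norm_le_zero_iff, sub_eq_zero] at h

theorem Set.OrdConnected.eq_mul_exp_of_hasDerivAt_const_mul {s : Set ℝ} (hs : s.OrdConnected)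
    {f : ℝ → ℝ} {c : ℝ} (hf : ∀ t ∈ s, HasDerivAt f (c * f t) t) {t t₀ : ℝ} (ht : t ∈ s)
    (ht₀ : t₀ ∈ s) : f t = f t₀ * exp (c * (t - t₀)) := by
  have hconst : f t * exp (-c * t) = f t₀ * exp (-c * t₀) := by
    refine hs.convex.eq_of_forall_hasDerivAt_zero (f := fun u => f u * exp (-c * u))
      (fun u hu => ?_) ht ht₀
    exact ((hf u hu).mul ((hasDerivAt_id u).const_mul (-c)).exp).congr_deriv (by ring)
  calc f t = f t * exp (-c * t) * exp (c * t) := by rw [mul_assoc, ← exp_add]; simp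
    _ = f t₀ * exp (-c * t₀) * exp (c * t) := by rw [hconst]
    _ = f t₀ * exp (c * (t - t₀)) := by rw [mul_assoc, ← exp_add]; ring_nf

theorem sgha_ode_ratio_dynamics_general
    (d : ℕ)
    (μ : Fin d → ℝ) (β : Fin d → ℝ)
    (T : Set ℝ) (hTconn : T.OrdConnected)
    (w : ℝ → Fin d → ℝ)
    (hw : ∀ t ∈ T, ∀ i, HasDerivAt (fun s => w s i)
        (μ i * (β i - ∑ l, β l * (w t l) ^ 2) * w t i) t)
    (j k : Fin d)
    (hwj : ∀ t ∈ T, 0 < w t j) (hwk : ∀ t ∈ T, 0 < w t k)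
    (v : ℝ → ℝ)
    (hv : v = fun t => (w t k) ^ (μ j) / (w t j) ^ (μ k)) :
    (∀ t ∈ T, HasDerivAt v (μ j * μ k * (β k - β j) * v t) t) ∧
    (∀ t ∈ T, ∀ t₀ ∈ T,
      v t = v t₀ * Real.exp (μ j * μ k * (β k - β j) * (t - t₀))) := by
  have hderiv : ∀ t ∈ T, HasDerivAt v (μ j * μ k * (β k - β j) * v t) t := by
    intro t ht
    have hnum := (hw t ht k).rpow_const_of_relative_rate (μ j) (hwk t ht).ne'
    have hden := (hw t ht j).rpow_const_of_relative_rate (μ k) (hwj t ht).ne'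
    subst hv
    exact (hnum.div_of_relative_rate hden (rpow_pos_of_pos (hwj t ht) _).ne').congr_deriv
      (by ring)
  exact ⟨hderiv, fun t ht t₀ ht₀ => hTconn.eq_mul_exp_of_hasDerivAt_const_mul hderiv ht ht₀⟩

/-- **ODE for the ratios, Lemma 4.2.** If `w` solves
`w_i' = μ_i (β_i − Σ_l β_l w_l²) w_i` on an open interval `T` and `w_j, w_k > 0` on `T`,
then `v(t) = w_k(t)^{μ_j} / w_j(t)^{μ_k}` satisfies `v' = μ_j μ_k (β_k − β_j) v` on `T`,
hence `v(t) = v(t₀) exp(μ_j μ_k (β_k − β_j)(t − t₀))`. -/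
theorem sgha_ode_ratio_dynamics
    (d : ℕ) (hd : 1 ≤ d)
    (μ : Fin d → ℝ) (hμ : ∀ i, 0 < μ i) (β : Fin d → ℝ)
    (T : Set ℝ) (hTopen : IsOpen T) (hTconn : T.OrdConnected)
    (w : ℝ → Fin d → ℝ)
    (hw : ∀ t ∈ T, ∀ i, HasDerivAt (fun s => w s i)
        (μ i * (β i - ∑ l, β l * (w t l) ^ 2) * w t i) t)
    (j k : Fin d) (hjk : j ≠ k)
    (hwj : ∀ t ∈ T, 0 < w t j) (hwk : ∀ t ∈ T, 0 < w t k)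
    (v : ℝ → ℝ)
    (hv : v = fun t => (w t k) ^ (μ j) / (w t j) ^ (μ k)) :
    (∀ t ∈ T, HasDerivAt v (μ j * μ k * (β k - β j) * v t) t) ∧
    (∀ t ∈ T, ∀ t₀ ∈ T,
      v t = v t₀ * Real.exp (μ j * μ k * (β k - β j) * (t - t₀))) :=
  sgha_ode_ratio_dynamics_general d μ β T hTconn w hw j k hwj hwk v hv
end

section
/- Let d ≥ 1, let μ₁, …, μ_d > 0 and β₁ > β₂ ≥ β₃ ≥ ⋯ ≥ β_d > 0, and let w : [0, ∞) → ℝ^d be differentiable with w_i'(t) = μ_i (β_i − Σ_{l=1}^d β_l w_l(t)²) w_i(t) for all t ≥ 0 and all i. If w₁(0) ≠ 0, then as t → ∞, w₁(t)² → 1 and w_i(t) → 0 for every i ≥ 2; that is, the ODE trajectory converges to a global optimum (±e₁) of the generalized eigenvalue problem in the transformed coordinates. -/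
/-!
Write `S = Σ β_l w_l²`. Along the flow `(log w₁²)' = 2μ₁(β₁ − S)` and `S ≥ β₁ w₁²`, so `log w₁²`
decreases at a definite rate while it is above any `η > 0`, and is therefore eventually below `η`.
For `i ≠ 1` the coefficient `μ_i(β_i − S)` of the linear equation for `w_i` equals
`(μ_i / 2μ₁) (log w₁²)' − μ_i(β₁ − β_i)`, hence
`w_i(t) = w_i(0) exp(μ_i / 2μ₁ · (log w₁²(t) − log w₁²(0)) − μ_i(β₁ − β_i) t) → 0`.
Then `S − β₁ w₁² → 0`, so `log w₁²` eventually increases at a definite rate while it is below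
`−η`. The logarithms make sense because `w₁`, solving a linear equation and nonzero at time `0`,
never vanishes (backward uniqueness).
-/

open Set Filter Topology Real

theorem eventually_le_of_hasDerivAt_le_neg {h h' : ℝ → ℝ} {C κ : ℝ} (hκ : 0 < κ)
    (hderiv : ∀ᶠ t in atTop, HasDerivAt h (h' t) t)
    (hdecr : ∀ᶠ t in atTop, C ≤ h t → h' t ≤ -κ) :
    ∀ᶠ t in atTop, h t ≤ C := by
  obtain ⟨T, hT⟩ := eventually_atTop.1 (hderiv.and hdecr)
  have hcont : ∀ a b, T ≤ a → ContinuousOn h (Icc a b) := fun a b ha x hx =>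
    (hT x (ha.trans hx.1)).1.continuousAt.continuousWithinAt
  have hderiv' : ∀ a b, T ≤ a → ∀ x ∈ Ico a b, HasDerivWithinAt h (h' x) (Ici x) x :=
    fun a b ha x hx => (hT x (ha.trans hx.1)).1.hasDerivWithinAt
  obtain ⟨t₀, hTt₀, ht₀⟩ : ∃ t₀, T ≤ t₀ ∧ h t₀ ≤ C := by
    by_contra! hC
    set b := T + (h T - C) / κ + 1
    have hTb : T ≤ b := by
      have : 0 ≤ (h T - C) / κ := div_nonneg (by linarith [hC T le_rfl]) hκ.le
      linarith
    have hlin := image_le_of_deriv_right_le_deriv_boundary (hcont T b le_rfl)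
      (hderiv' T b le_rfl) (B := fun t => h T - κ * (t - T)) (B' := fun _ => -κ) (by simp)
      (by fun_prop) (fun x _ => by
        simpa using
          ((((hasDerivAt_id x).sub_const T).const_mul κ).const_sub (h T)).hasDerivWithinAt)
      (fun x hx => (hT x hx.1).2 (hC x hx.1).le) ⟨hTb, le_rfl⟩
    have : κ * (b - T) = h T - C + κ := by simp only [b]; field_simp; ring
    linarith [hC b hTb]
  filter_upwards [eventually_ge_atTop t₀] with t ht
  exact image_le_of_deriv_right_lt_deriv_boundary (hcont t₀ t hTt₀) (hderiv' t₀ t hTt₀)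
    (B := fun _ => C) (B' := fun _ => 0) ht₀ (fun _ => hasDerivAt_const _ _)
    (fun x hx hx' => ((hT x (hTt₀.trans hx.1)).2 hx'.ge).trans_lt (neg_neg_of_pos hκ))
    ⟨ht, le_rfl⟩

theorem eq_zero_of_hasDerivWithinAt_eq_mul_of_eq_zero {f a : ℝ → ℝ} {t₀ b : ℝ}
    (ha : ContinuousOn a (Icc t₀ b))
    (hf : ∀ t ∈ Icc t₀ b, HasDerivWithinAt f (a t * f t) (Ici t₀) t) (htb : t₀ ≤ b)
    (hb : f b = 0) : f t₀ = 0 := by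
  obtain ⟨M, hM⟩ := isCompact_Icc.exists_bound_of_continuousOn ha
  have hlip : ∀ t ∈ Ioc t₀ b, LipschitzOnWith (Real.toNNReal M) (fun x => a t * x) univ := by
    intro t ht
    refine (LipschitzWith.of_dist_le_mul fun x y => ?_).lipschitzOnWith
    rw [Real.dist_eq, Real.dist_eq, ← mul_sub, abs_mul]
    exact mul_le_mul_of_nonneg_right ((hM t (Ioc_subset_Icc_self ht)).trans (le_coe_toNNReal M))
      (abs_nonneg _)
  have hderiv : ∀ t ∈ Ioc t₀ b, HasDerivWithinAt f (a t * f t) (Iic t) t := fun t ht =>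
    ((hf t (Ioc_subset_Icc_self ht)).hasDerivAt (Ici_mem_nhds ht.1)).hasDerivWithinAt
  have := ODE_solution_unique_of_mem_Icc_left (v := fun t x => a t * x) (s := fun _ => univ)
    (g := 0) hlip (fun t ht => (hf t ht).continuousWithinAt.mono Icc_subset_Ici_self)
    hderiv (fun _ _ => mem_univ _) continuousOn_const
    (fun t _ => by simpa using hasDerivWithinAt_zero (F := ℝ) t (Iic t)) (fun _ _ => mem_univ _) hb
    ⟨le_rfl, htb⟩
  simpa using this

theorem eq_mul_exp_of_hasDerivWithinAt_eq_mul {f A a : ℝ → ℝ} {t₀ : ℝ}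
    (hf : ∀ t ∈ Ici t₀, HasDerivWithinAt f (a t * f t) (Ici t₀) t)
    (hA : ∀ t ∈ Ici t₀, HasDerivWithinAt A (a t) (Ici t₀) t) {t : ℝ} (ht : t₀ ≤ t) :
    f t = f t₀ * exp (A t - A t₀) := by
  have hderiv : ∀ s ∈ Ici t₀,
      HasDerivWithinAt (fun s => f s * exp (-A s)) 0 (Ici t₀) s := fun s hs =>
    ((hf s hs).mul (hA s hs).neg.exp).congr_deriv (by ring)
  have hconst := constant_of_has_deriv_right_zero (f := fun s => f s * exp (-A s))
    (fun s hs => (hderiv s hs.1).continuousWithinAt.mono Icc_subset_Ici_self)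
    (fun s hs => (hderiv s hs.1).mono (Ici_subset_Ici.2 hs.1)) t ⟨ht, le_rfl⟩
  have := congrArg (· * exp (A t)) hconst
  simp only [mul_assoc, ← exp_add, neg_add_cancel, exp_zero, mul_one] at this
  rw [this, neg_add_eq_sub]

def weightedSqNorm {ι : Type*} [Fintype ι] (β x : ι → ℝ) : ℝ := ∑ l, β l * x l ^ 2

def IsSGHAMeanFieldSolution {ι : Type*} [Fintype ι] (μ β : ι → ℝ) (w : ℝ → ι → ℝ) : Prop :=
  ∀ t ∈ Ici (0 : ℝ), ∀ i, HasDerivWithinAt (fun s => w s i)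
    (μ i * (β i - weightedSqNorm β (w t)) * w t i) (Ici 0) t

theorem mul_sq_le_weightedSqNorm {ι : Type*} [Fintype ι] {β : ι → ℝ} (hβ : ∀ l, 0 ≤ β l)
    (x : ι → ℝ) (i : ι) : β i * x i ^ 2 ≤ weightedSqNorm β x :=
  Finset.single_le_sum (f := fun l => β l * x l ^ 2) (fun l _ => mul_nonneg (hβ l) (sq_nonneg _))
    (Finset.mem_univ i)

namespace IsSGHAMeanFieldSolution

variable {ι : Type*} [Fintype ι] {μ β : ι → ℝ} {w : ℝ → ι → ℝ}

theorem continuousOn_weightedSqNorm (hw : IsSGHAMeanFieldSolution μ β w) :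
    ContinuousOn (fun t => weightedSqNorm β (w t)) (Ici 0) :=
  continuousOn_finsetSum _ fun l _ =>
    continuousOn_const.mul (ContinuousOn.pow (fun t ht => (hw t ht l).continuousWithinAt) 2)

theorem apply_ne_zero (hw : IsSGHAMeanFieldSolution μ β w) {i : ι} (h0 : w 0 i ≠ 0) {t : ℝ}
    (ht : t ∈ Ici 0) : w t i ≠ 0 := fun hwt =>
  h0 <| eq_zero_of_hasDerivWithinAt_eq_mul_of_eq_zero
    ((continuousOn_const.mul (continuousOn_const.sub hw.continuousOn_weightedSqNorm)).mono
      Icc_subset_Ici_self) (fun s hs => hw s hs.1 i) ht hwt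

theorem hasDerivWithinAt_log_sq (hw : IsSGHAMeanFieldSolution μ β w) {i : ι}
    (hne : ∀ t ∈ Ici 0, w t i ≠ 0) {t : ℝ} (ht : t ∈ Ici 0) :
    HasDerivWithinAt (fun s => log (w s i ^ 2)) (2 * μ i * (β i - weightedSqNorm β (w t)))
      (Ici 0) t :=
  (((hw t ht i).pow 2).log (pow_ne_zero 2 (hne t ht))).congr_deriv <| by
    simp only [Pi.pow_apply]
    field_simp [hne t ht]
    norm_num
    ring

theorem eventually_log_sq_le (hw : IsSGHAMeanFieldSolution μ β w) (hβ : ∀ l, 0 ≤ β l) {i : ι}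
    (hμ : 0 < μ i) (hβi : 0 < β i) (hne : ∀ t ∈ Ici 0, w t i ≠ 0) {η : ℝ} (hη : 0 < η) :
    ∀ᶠ t in atTop, log (w t i ^ 2) ≤ η := by
  have hδ : 0 < exp η - 1 := sub_pos.2 (one_lt_exp_iff.2 hη)
  apply eventually_le_of_hasDerivAt_le_neg (mul_pos (mul_pos (mul_pos two_pos hμ) hβi) hδ)
  · filter_upwards [eventually_gt_atTop 0] with t ht
    exact (hw.hasDerivWithinAt_log_sq hne ht.le).hasDerivAt (Ici_mem_nhds ht)
  · filter_upwards [eventually_ge_atTop 0] with t ht hle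
    have hsq : exp η ≤ w t i ^ 2 := (le_log_iff_exp_le (sq_pos_iff.2 (hne t ht))).1 hle
    have hS : β i * exp η ≤ weightedSqNorm β (w t) :=
      (mul_le_mul_of_nonneg_left hsq hβi.le).trans (mul_sq_le_weightedSqNorm hβ (w t) i)
    have := mul_le_mul_of_nonneg_left hS (mul_pos two_pos hμ).le
    linarith

theorem tendsto_apply_zero (hw : IsSGHAMeanFieldSolution μ β w) {i e : ι} (hμi : 0 < μ i)
    (hμe : 0 < μ e) (hβ : β i < β e) (hne : ∀ t ∈ Ici 0, w t e ≠ 0)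
    {C : ℝ} (hbdd : ∀ᶠ t in atTop, log (w t e ^ 2) ≤ C) :
    Tendsto (fun t => w t i) atTop (𝓝 0) := by
  set c := μ i * (β e - β i)
  have hc : 0 < c := mul_pos hμi (sub_pos.2 hβ)
  set A : ℝ → ℝ := fun t => μ i / (2 * μ e) * log (w t e ^ 2) - c * t
  have hA : ∀ t ∈ Ici 0, HasDerivWithinAt A (μ i * (β i - weightedSqNorm β (w t))) (Ici 0) t :=
    fun t ht => (((hw.hasDerivWithinAt_log_sq hne ht).const_mul _).sub
      ((hasDerivWithinAt_id t _).const_mul c)).congr_deriv (by field_simp; ring)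
  have hA_bot : Tendsto A atTop atBot := by
    refine tendsto_atBot_mono' _ ?_ (tendsto_atBot_add_const_left _ (μ i / (2 * μ e) * C)
      (tendsto_id.const_mul_atTop_of_neg (neg_neg_of_pos hc)))
    filter_upwards [hbdd] with t ht
    have := mul_le_mul_of_nonneg_left ht (div_pos hμi (mul_pos two_pos hμe)).le
    simp only [A, id]
    linarith
  have hlim : Tendsto (fun t => w 0 i * exp (A t - A 0)) atTop (𝓝 0) := by
    simpa [sub_eq_add_neg] using
      (tendsto_exp_atBot.comp (tendsto_atBot_add_const_right _ (-A 0) hA_bot)).const_mul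
      (w 0 i)
  refine hlim.congr' ?_
  filter_upwards [eventually_ge_atTop 0] with t ht
  exact (eq_mul_exp_of_hasDerivWithinAt_eq_mul (fun s hs => hw s hs i) hA ht).symm

theorem eventually_neg_le_log_sq (hw : IsSGHAMeanFieldSolution μ β w) {e : ι} (hμ : 0 < μ e)
    (hβe : 0 < β e) (hne : ∀ t ∈ Ici 0, w t e ≠ 0)
    (hcoord : ∀ i, i ≠ e → Tendsto (fun t => w t i) atTop (𝓝 0)) {η : ℝ} (hη : 0 < η) :
    ∀ᶠ t in atTop, -η ≤ log (w t e ^ 2) := by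
  classical
  set δ := 1 - exp (-η)
  have hδ : 0 < δ := sub_pos.2 (exp_lt_one_iff.2 (neg_neg_of_pos hη))
  set R : ℝ → ℝ := fun t => ∑ l ∈ Finset.univ.erase e, β l * w t l ^ 2
  have hR : Tendsto R atTop (𝓝 0) := by
    simpa using tendsto_finsetSum _ fun l hl =>
      ((hcoord l (Finset.ne_of_mem_erase hl)).pow 2).const_mul (β l)
  have hsplit : ∀ t, weightedSqNorm β (w t) = β e * w t e ^ 2 + R t := fun t =>
    (Finset.add_sum_erase _ _ (Finset.mem_univ e)).symm
  have hκ : 0 < μ e * β e * δ := by positivity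
  have hneg := eventually_le_of_hasDerivAt_le_neg (h := fun t => -log (w t e ^ 2))
    (h' := fun t => -(2 * μ e * (β e - weightedSqNorm β (w t)))) (C := η) hκ ?_ ?_
  · filter_upwards [hneg] with t ht
    linarith
  · filter_upwards [eventually_gt_atTop 0] with t ht
    exact ((hw.hasDerivWithinAt_log_sq hne ht.le).hasDerivAt (Ici_mem_nhds ht)).neg
  · filter_upwards [eventually_ge_atTop 0, hR.eventually (gt_mem_nhds (half_pos (mul_pos hβe hδ)))]
      with t ht hRt hle
    have hsq : w t e ^ 2 ≤ exp (-η) :=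
      (log_le_iff_le_exp (sq_pos_iff.2 (hne t ht))).1 (by linarith)
    have hgap : β e * δ / 2 ≤ β e - weightedSqNorm β (w t) := by
      have := mul_le_mul_of_nonneg_left hsq hβe.le
      rw [hsplit]
      simp only [δ] at hRt ⊢
      linarith
    have := mul_le_mul_of_nonneg_left hgap hμ.le
    linarith

theorem tendsto_sq_one (hw : IsSGHAMeanFieldSolution μ β w) (hβ : ∀ l, 0 ≤ β l) {e : ι}
    (hμ : 0 < μ e) (hβe : 0 < β e) (hne : ∀ t ∈ Ici 0, w t e ≠ 0)
    (hcoord : ∀ i, i ≠ e → Tendsto (fun t => w t i) atTop (𝓝 0)) :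
    Tendsto (fun t => w t e ^ 2) atTop (𝓝 1) := by
  have hlog : Tendsto (fun t => log (w t e ^ 2)) atTop (𝓝 0) := by
    refine tendsto_order.2 ⟨fun a ha => ?_, fun b hb => ?_⟩
    · filter_upwards [hw.eventually_neg_le_log_sq hμ hβe hne hcoord (half_pos (neg_pos.2 ha))]
        with t ht
      linarith
    · filter_upwards [hw.eventually_log_sq_le hβ hμ hβe hne (half_pos hb)] with t ht
      linarith
  rw [← exp_zero]
  refine ((continuous_exp.tendsto 0).comp hlog).congr' ?_
  filter_upwards [eventually_ge_atTop 0] with t ht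
  exact exp_log (sq_pos_iff.2 (hne t ht))

end IsSGHAMeanFieldSolution

theorem sgha_ode_global_convergence_general
    (d : ℕ) (hd : 1 ≤ d)
    (μ : Fin d → ℝ) (hμ : ∀ i, 0 < μ i)
    (β : Fin d → ℝ) (hβpos : ∀ i, 0 < β i)
    (hβtop : ∀ i : Fin d, i ≠ ⟨0, hd⟩ → β i < β ⟨0, hd⟩)
    (w : ℝ → Fin d → ℝ)
    (hw : ∀ t ∈ Set.Ici (0 : ℝ), ∀ i, HasDerivWithinAt (fun s => w s i)
        (μ i * (β i - ∑ l, β l * (w t l) ^ 2) * w t i) (Set.Ici 0) t)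
    (h0 : w 0 ⟨0, hd⟩ ≠ 0) :
    Filter.Tendsto (fun t => (w t ⟨0, hd⟩) ^ 2) Filter.atTop (nhds 1) ∧
    ∀ i : Fin d, i ≠ ⟨0, hd⟩ →
      Filter.Tendsto (fun t => w t i) Filter.atTop (nhds 0) := by
  have hw : IsSGHAMeanFieldSolution μ β w := hw
  have hβ : ∀ l, 0 ≤ β l := fun l => (hβpos l).le
  have hne : ∀ t ∈ Ici (0 : ℝ), w t ⟨0, hd⟩ ≠ 0 := fun t ht => hw.apply_ne_zero h0 ht
  have hcoord : ∀ i, i ≠ ⟨0, hd⟩ → Tendsto (fun t => w t i) atTop (𝓝 0) := fun i hi =>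
    hw.tendsto_apply_zero (hμ i) (hμ _) (hβtop i hi) hne
      (hw.eventually_log_sq_le hβ (hμ _) (hβpos _) hne one_pos)
  exact ⟨hw.tendsto_sq_one hβ (hμ _) (hβpos _) hne hcoord, hcoord⟩

/-- Global convergence of the mean-field ODE of SGHA:
if `w` solves `w_i' = μ_i (β_i − Σ_l β_l w_l²) w_i` on `[0, ∞)` with `μ_i > 0`,
`β₁ > β₂ ≥ ⋯ ≥ β_d > 0`, and `w₁(0) ≠ 0`, then `w₁(t)² → 1` and `w_i(t) → 0` for all
`i ≥ 2`: the trajectory converges to a global optimum (`±e₁`) of the generalized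
eigenvalue problem in the transformed coordinates. -/
theorem sgha_ode_global_convergence
    (d : ℕ) (hd : 1 ≤ d)
    (μ : Fin d → ℝ) (hμ : ∀ i, 0 < μ i)
    (β : Fin d → ℝ) (hβpos : ∀ i, 0 < β i)
    (hβtop : ∀ i : Fin d, i ≠ ⟨0, hd⟩ → β i < β ⟨0, hd⟩)
    (hβmono : ∀ i j : Fin d, i ≤ j → β j ≤ β i)
    (w : ℝ → Fin d → ℝ)
    (hw : ∀ t ∈ Set.Ici (0 : ℝ), ∀ i, HasDerivWithinAt (fun s => w s i)
        (μ i * (β i - ∑ l, β l * (w t l) ^ 2) * w t i) (Set.Ici 0) t)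
    (h0 : w 0 ⟨0, hd⟩ ≠ 0) :
    Filter.Tendsto (fun t => (w t ⟨0, hd⟩) ^ 2) Filter.atTop (nhds 1) ∧
    ∀ i : Fin d, i ≠ ⟨0, hd⟩ →
      Filter.Tendsto (fun t => w t i) Filter.atTop (nhds 0) :=
  sgha_ode_global_convergence_general d hd μ hμ β hβpos hβtop w hw h0
end
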